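/- arXiv:2510.17506 — 7 statements merged into one kernel-verified Lean document; each statement's English description precedes it below -/
import Mathlib

section
/- Let 0 < a < c and b > 0, and let T be the planar map T(x,y) = ((1 − (a + A(x,y))y²)x, (1 + (b + B(x))x² − (c + C(y))y²)y) with A, B, C real-analytic near the origin and vanishing at the origin. Define W(x,y) := bx² + (a/2)y². Then there exists δ > 0 such that for every initial point (x₀, y₀) with 0 ≤ x₀ < δ and 0 < y₀ < δ, the iterates (x_t, y_t) := T^t(x₀, y₀) satisfy: x_{t+1} ≤ x_t for all t ∈ ℕ, and y_t² ≤ (2/a)·W(x₀, y₀) for all t ∈ ℕ. -/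
set_option maxHeartbeats 1000000 in
/-- Lyapunov bounds for the parabolic normal form.
With `W(x,y) = bx² + (a/2)y²`, near the origin the iterates of
`T(x,y) = ((1-(a+A(x,y))y²)x, (1+(b+B(x))x²-(c+C(y))y²)y)` have non-increasing
first component and second component uniformly bounded by `y_t² ≤ (2/a)W(x₀,y₀)`. -/
theorem stmt_4
    (a b c : ℝ) (ha : 0 < a) (hac : a < c) (hb : 0 < b)
    (A : ℝ × ℝ → ℝ) (B C : ℝ → ℝ)
    (hA : AnalyticAt ℝ A (0, 0)) (hBa : AnalyticAt ℝ B 0) (hCa : AnalyticAt ℝ C 0)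
    (hA0 : A (0, 0) = 0) (hB0 : B 0 = 0) (hC0 : C 0 = 0)
    (T : ℝ × ℝ → ℝ × ℝ)
    (hT : ∀ x y : ℝ,
      T (x, y) = ((1 - (a + A (x, y)) * y ^ 2) * x,
                  (1 + (b + B x) * x ^ 2 - (c + C y) * y ^ 2) * y)) :
    ∃ δ : ℝ, 0 < δ ∧ ∀ x₀ y₀ : ℝ, 0 ≤ x₀ → x₀ < δ → 0 < y₀ → y₀ < δ →
      (∀ t : ℕ, (T^[t + 1] (x₀, y₀)).1 ≤ (T^[t] (x₀, y₀)).1) ∧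
      (∀ t : ℕ, ((T^[t] (x₀, y₀)).2) ^ 2 ≤ (2 / a) * (b * x₀ ^ 2 + (a / 2) * y₀ ^ 2)) := by
  have hc : 0 < c := ha.trans hac
  -- continuity bounds for the perturbations
  obtain ⟨rA, hrA, hAb⟩ : ∃ r > 0, ∀ q : ℝ × ℝ, dist q (0,0) < r → |A q| ≤ a/4 := by
    have := hA.continuousAt
    rw [Metric.continuousAt_iff] at this
    obtain ⟨r, hr, h⟩ := this (a/4) (by positivity)
    exact ⟨r, hr, fun q hq => by
      simpa [← Prod.mk_zero_zero, hA0, Real.dist_eq] using (h hq).le⟩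
  obtain ⟨rB, hrB, hBb⟩ : ∃ r > 0, ∀ q : ℝ, dist q 0 < r → |B q| ≤ b/16 := by
    have := hBa.continuousAt
    rw [Metric.continuousAt_iff] at this
    obtain ⟨r, hr, h⟩ := this (b/16) (by positivity)
    exact ⟨r, hr, fun q hq => by simpa [hB0, Real.dist_eq] using (h hq).le⟩
  obtain ⟨rC, hrC, hCb⟩ : ∃ r > 0, ∀ q : ℝ, dist q 0 < r → |C q| ≤ c/2 := by
    have := hCa.continuousAt
    rw [Metric.continuousAt_iff] at this
    obtain ⟨r, hr, h⟩ := this (c/2) (by positivity)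
    exact ⟨r, hr, fun q hq => by simpa [hC0, Real.dist_eq] using (h hq).le⟩
  -- the smallness scale
  set s : ℝ := Real.sqrt (min (min (2/(5*a)) (1/(17*b))) (1/(3*c))) with hs_def
  have hsmin : (0:ℝ) < min (min (2/(5*a)) (1/(17*b))) (1/(3*c)) := by positivity
  have hspos : 0 < s := Real.sqrt_pos.mpr hsmin
  have hssq : s^2 = min (min (2/(5*a)) (1/(17*b))) (1/(3*c)) := Real.sq_sqrt hsmin.le
  set η : ℝ := min (min (rA/2) (rB/2)) (min (rC/2) s) with hη_def
  have hηpos : 0 < η := by positivity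
  have hηs : η ≤ s := le_trans (min_le_right _ _) (min_le_right _ _)
  have hηsq : η^2 ≤ min (min (2/(5*a)) (1/(17*b))) (1/(3*c)) := by
    rw [← hssq]; exact pow_le_pow_left₀ hηpos.le hηs 2
  have hcap1 : η^2 ≤ 2/(5*a) := le_trans hηsq (le_trans (min_le_left _ _) (min_le_left _ _))
  have hcap2 : η^2 ≤ 1/(17*b) := le_trans hηsq (le_trans (min_le_left _ _) (min_le_right _ _))
  have hcap3 : η^2 ≤ 1/(3*c) := le_trans hηsq (min_le_right _ _)
  have hηrA : η < rA := lt_of_le_of_lt (le_trans (min_le_left _ _) (min_le_left _ _)) (by linarith)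
  have hηrB : η < rB := lt_of_le_of_lt (le_trans (min_le_left _ _) (min_le_right _ _)) (by linarith)
  have hηrC : η < rC := lt_of_le_of_lt (le_trans (min_le_right _ _) (min_le_left _ _)) (by linarith)
  set m : ℝ := min (b*η^2) ((a/2)*η^2) with hm_def
  have hmpos : 0 < m := lt_min (by positivity) (by positivity)
  set δ : ℝ := Real.sqrt (m/(b+a/2)) with hδ_def
  have hδpos : 0 < δ := Real.sqrt_pos.mpr (by positivity)
  have hδsq : δ^2 = m/(b+a/2) := Real.sq_sqrt (by positivity)
  have hδsq' : (b+a/2)*δ^2 = m := by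
    rw [hδsq]; field_simp
  have hmb : m ≤ b*η^2 := min_le_left _ _
  have hma : m ≤ (a/2)*η^2 := min_le_right _ _
  clear_value s η m δ
  clear hs_def hη_def hm_def hδ_def hssq hηs hηsq hsmin hspos
  -- the one-step lemma on the invariant region
  have step : ∀ p : ℝ × ℝ, 0 ≤ p.1 → 0 < p.2 → b*p.1^2 + (a/2)*p.2^2 ≤ m →
      (T p).1 ≤ p.1 ∧ 0 ≤ (T p).1 ∧ 0 < (T p).2 ∧
      b*(T p).1^2 + (a/2)*(T p).2^2 ≤ b*p.1^2 + (a/2)*p.2^2 := by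
    rintro ⟨x, y⟩ hx0 hy0 hW
    simp only at hx0 hy0 hW ⊢
    have hxsq : x^2 ≤ η^2 := by
      have h1 : b*x^2 ≤ m := by
        linarith only [hW, mul_nonneg (le_of_lt (half_pos ha)) (sq_nonneg y)]
      nlinarith only [h1, hmb, hb]
    have hysq : y^2 ≤ η^2 := by
      have h1 : (a/2)*y^2 ≤ m := by
        linarith only [hW, mul_nonneg hb.le (sq_nonneg x)]
      nlinarith only [h1, hma, ha]
    have hxabs : |x| ≤ η := by
      rw [abs_le]
      constructor <;> nlinarith only [hxsq, hηpos, sq_nonneg (x+η), sq_nonneg (x-η)]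
    have hyabs : |y| ≤ η := by
      rw [abs_le]
      constructor <;> nlinarith only [hysq, hηpos, sq_nonneg (y+η), sq_nonneg (y-η)]
    have hAx : |A (x, y)| ≤ a/4 := by
      apply hAb
      have : dist ((x,y) : ℝ×ℝ) (0,0) = max |x| |y| := by
        simp [Prod.dist_eq, Real.dist_eq, Prod.norm_def, Real.norm_eq_abs]
      rw [this]
      exact lt_of_le_of_lt (max_le hxabs hyabs) hηrA
    have hBx : |B x| ≤ b/16 := by
      apply hBb
      rw [Real.dist_eq, sub_zero]
      exact lt_of_le_of_lt hxabs hηrB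
    have hCy : |C y| ≤ c/2 := by
      apply hCb
      rw [Real.dist_eq, sub_zero]
      exact lt_of_le_of_lt hyabs hηrC
    rw [abs_le] at hAx hBx hCy
    rw [hT x y]
    simp only
    set u : ℝ := (a + A (x, y)) * y ^ 2 with hu_def
    set P : ℝ := (b + B x) * x ^ 2 with hP_def
    set Q : ℝ := (c + C y) * y ^ 2 with hQ_def
    have hy2 : (0:ℝ) ≤ y^2 := sq_nonneg y
    have hx2 : (0:ℝ) ≤ x^2 := sq_nonneg x
    have hu0 : 0 ≤ u := by
      apply mul_nonneg _ hy2; linarith [hAx.1]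
    have hcapy : y^2 ≤ 2/(5*a) := le_trans hysq hcap1
    have hcapx : x^2 ≤ 1/(17*b) := le_trans hxsq hcap2
    have hcapy3 : y^2 ≤ 1/(3*c) := le_trans hysq hcap3
    have hu1 : u ≤ 1/2 := by
      have h5 : u ≤ (5*a/4) * y^2 := by
        rw [hu_def]; apply mul_le_mul_of_nonneg_right _ hy2; linarith [hAx.2]
      have : (5*a/4) * y^2 ≤ (5*a/4) * (2/(5*a)) :=
        mul_le_mul_of_nonneg_left hcapy (by positivity)
      have heq : (5*a/4) * (2/(5*a)) = 1/2 := by field_simp; ring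
      linarith
    have hu2 : (3*a/4)*y^2 ≤ u := by
      rw [hu_def]; apply mul_le_mul_of_nonneg_right _ hy2; linarith [hAx.1]
    have hP0 : 0 ≤ P := by
      apply mul_nonneg _ hx2; linarith [hBx.1]
    have hP2 : P ≤ (17*b/16)*x^2 := by
      rw [hP_def]; apply mul_le_mul_of_nonneg_right _ hx2; linarith [hBx.2]
    have hP1 : P ≤ 1/16 := by
      have : (17*b/16)*x^2 ≤ (17*b/16)*(1/(17*b)) :=
        mul_le_mul_of_nonneg_left hcapx (by positivity)
      have heq : (17*b/16)*(1/(17*b)) = 1/16 := by field_simp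
      linarith
    have hQ0 : 0 ≤ Q := by
      apply mul_nonneg _ hy2; linarith [hCy.1]
    have hQ1 : Q ≤ 1/2 := by
      have h5 : Q ≤ (3*c/2) * y^2 := by
        rw [hQ_def]; apply mul_le_mul_of_nonneg_right _ hy2; linarith [hCy.2]
      have : (3*c/2) * y^2 ≤ (3*c/2) * (1/(3*c)) :=
        mul_le_mul_of_nonneg_left hcapy3 (by positivity)
      have heq : (3*c/2) * (1/(3*c)) = 1/2 := by field_simp
      linarith
    refine ⟨?_, ?_, ?_, ?_⟩
    · nlinarith only [mul_nonneg hu0 hx0]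
    · apply mul_nonneg _ hx0; linarith
    · apply mul_pos _ hy0; linarith
    · -- the Lyapunov inequality
      rcases le_or_gt P Q with h | h
      · nlinarith only [mul_nonneg hx2 (mul_nonneg (mul_nonneg hb.le hu0)
            (show (0:ℝ) ≤ 2-u by linarith only [hu1])),
          mul_nonneg hy2 (mul_nonneg ha.le (mul_nonneg
            (show (0:ℝ) ≤ Q-P by linarith only [h])
            (show (0:ℝ) ≤ 2+P-Q by linarith only [hP0, hQ1])))]
      · have h3 : (3/2)*u ≤ u*(2-u) := by
          nlinarith only [mul_nonneg hu0 (show (0:ℝ) ≤ 1/2-u by linarith only [hu1])]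
        have t1 : b*x^2*((3/2)*((3*a/4)*y^2)) ≤ b*x^2*(u*(2-u)) := by
          have h4 : (3/2)*((3*a/4)*y^2) ≤ (3/2)*u := by linarith only [hu2]
          exact mul_le_mul_of_nonneg_left (le_trans h4 h3) (by positivity)
        have t2 : (a/2)*y^2*((P-Q)*(2+P-Q)) ≤ (a/2)*y^2*((33/16)*((17*b/16)*x^2)) := by
          have h1 : (P-Q)*(2+P-Q) ≤ P*(2+P) := by
            nlinarith only [mul_nonneg hQ0 (show (0:ℝ) ≤ 2+2*P-Q by linarith only [hP0, hQ1])]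
          have h2 : P*(2+P) ≤ (33/16)*((17*b/16)*x^2) := by
            nlinarith only [mul_nonneg hP0 (show (0:ℝ) ≤ 1/16-P by linarith only [hP1]), hP2]
          exact mul_le_mul_of_nonneg_left (le_trans h1 h2) (by positivity)
        nlinarith only [t1, t2,
          mul_nonneg (mul_nonneg ha.le hb.le) (mul_nonneg hx2 hy2)]
  refine ⟨δ, hδpos, fun x₀ y₀ hx₀ hx₀δ hy₀ hy₀δ => ?_⟩
  have hW0 : b*x₀^2 + (a/2)*y₀^2 ≤ m := by
    have h1 : x₀^2 ≤ δ^2 := by nlinarith only [hx₀, hx₀δ, hδpos]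
    have h2 : y₀^2 ≤ δ^2 := by nlinarith only [hy₀, hy₀δ, hδpos]
    nlinarith only [h1, h2, hb, ha, hδsq']
  have key : ∀ t : ℕ, 0 ≤ (T^[t] (x₀,y₀)).1 ∧ 0 < (T^[t] (x₀,y₀)).2 ∧
      b*(T^[t] (x₀,y₀)).1^2 + (a/2)*(T^[t] (x₀,y₀)).2^2 ≤ b*x₀^2 + (a/2)*y₀^2 := by
    intro t
    induction t with
    | zero => exact ⟨hx₀, hy₀, le_refl _⟩
    | succ t ih =>
      obtain ⟨h1, h2, h3⟩ := ih
      have hst := step (T^[t] (x₀,y₀)) h1 h2 (le_trans h3 hW0)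
      rw [Function.iterate_succ_apply']
      exact ⟨hst.2.1, hst.2.2.1, le_trans hst.2.2.2 h3⟩
  constructor
  · intro t
    obtain ⟨h1, h2, h3⟩ := key t
    have hst := step (T^[t] (x₀,y₀)) h1 h2 (le_trans h3 hW0)
    rw [Function.iterate_succ_apply']
    exact hst.1
  · intro t
    obtain ⟨h1, h2, h3⟩ := key t
    rw [div_mul_eq_mul_div, le_div_iff₀ ha]
    linarith only [h3, mul_nonneg hb.le (sq_nonneg (T^[t] (x₀,y₀)).1)]
end

section
/- Let δ > 0, K > 0 and for each α ∈ [0, δ] let r_α : [−δ, δ] → ℝ be a C¹ function with |r_α(x)| ≤ Kx⁴ and |r_α′(x)| ≤ K|x|³ for all |x| ≤ δ. For α ∈ [0, δ] define f_α(x) := −(1 + α)x + x³ + r_α(x). Then there exist γ₀ > 0 and C > 0 such that for all γ ∈ (0, γ₀] and all α₀, α₁ ∈ [0, γ]: (i) the composite f_{α₁} ∘ f_{α₀} is strictly monotonically increasing on [−2√γ, 2√γ]; (ii) if α₀ + α₁ = 0 then the only fixed point of f_{α₁} ∘ f_{α₀} in [−2√γ, 2√γ] is 0, and if α₀ + α₁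 > 0 then the fixed points of f_{α₁} ∘ f_{α₀} in [−2√γ, 2√γ] are exactly 0 together with two points ξ₋ < 0 < ξ₊ satisfying |ξ₊ − √((α₀+α₁)/2)| ≤ C(α₀+α₁) and |ξ₋ + √((α₀+α₁)/2)| ≤ C(α₀+α₁). -/
set_option maxHeartbeats 2000000

private lemma abs_sum8 (t1 t2 t3 t4 t5 t6 t7 t8 : ℝ) :
    |t1+t2+t3+t4+t5+t6+t7+t8| ≤ |t1|+|t2|+|t3|+|t4|+|t5|+|t6|+|t7|+|t8| := by
  calc |t1+t2+t3+t4+t5+t6+t7+t8| ≤ |t1+t2+t3+t4+t5+t6+t7|+|t8| := abs_add_le _ _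
    _ ≤ |t1+t2+t3+t4+t5+t6|+|t7|+|t8| := by gcongr; exact abs_add_le _ _
    _ ≤ |t1+t2+t3+t4+t5|+|t6|+|t7|+|t8| := by gcongr; exact abs_add_le _ _
    _ ≤ |t1+t2+t3+t4|+|t5|+|t6|+|t7|+|t8| := by gcongr; exact abs_add_le _ _
    _ ≤ |t1+t2+t3|+|t4|+|t5|+|t6|+|t7|+|t8| := by gcongr; exact abs_add_le _ _
    _ ≤ |t1+t2|+|t3|+|t4|+|t5|+|t6|+|t7|+|t8| := by gcongr; exact abs_add_le _ _
    _ ≤ |t1|+|t2|+|t3|+|t4|+|t5|+|t6|+|t7|+|t8| := by gcongr; exact abs_add_le _ _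

private lemma keyA (K w α₀ α₁ x a b y : ℝ)
    (hK : 0 < K) (hw : 0 < w) (hw10 : w ≤ 1/10) (hKw : K*w ≤ 1/400)
    (h00 : 0 ≤ α₀) (h0γ : α₀ ≤ w^2) (h10 : 0 ≤ α₁) (h1γ : α₁ ≤ w^2)
    (hx : |x| ≤ 2*w) (hy : y = -(1+α₀)*x + (x^3 + a))
    (ha : |a| ≤ K*x^4) (hb : |b| ≤ K*y^4) :
    |(-(1+α₁)*y + y^3 + b) - x - ((α₀+α₁)*x - 2*x^3)|
      ≤ (α₀+α₁)^2*|x| + 8*(α₀+α₁)*|x|^3 + (18*K+56)*x^4 := by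
  have hX0 : 0 ≤ |x| := abs_nonneg x
  have hx2 : x^2 = |x|^2 := (sq_abs x).symm
  have hx4 : x^4 = |x|^4 := by rw [← abs_pow]; exact (abs_of_nonneg (by positivity)).symm
  have hx40 : (0:ℝ) ≤ x^4 := by positivity
  have hX1 : |x| ≤ 1/5 := by linarith
  have hw100 : w^2 ≤ 1/100 := by
    have := mul_le_mul hw10 hw10 hw.le (by norm_num)
    linarith [sq_nonneg w, this]
  have hα₀1 : α₀ ≤ 1/100 := by linarith
  have hα₁1 : α₁ ≤ 1/100 := by linarith
  have hc2 : α₀^2 ≤ (1/100)*α₀ := by linarith [mul_le_mul_of_nonneg_left hα₀1 h00]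
  have hc3 : α₀^3 ≤ (1/100)*α₀^2 := by
    have := mul_le_mul_of_nonneg_left hα₀1 (sq_nonneg α₀)
    linarith [this]
  have hKX : K*|x| ≤ 1/200 := by
    have := mul_le_mul_of_nonneg_left hx hK.le
    linarith
  have hx3 : |x^3| = |x|^3 := abs_pow x 3
  have p5 : |x|^5 ≤ (1/5)*x^4 := by
    calc |x|^5 = |x| *|x|^4 := by ring
      _ ≤ (1/5)*|x|^4 := mul_le_mul_of_nonneg_right hX1 (by positivity)
      _ = (1/5)*x^4 := by rw [hx4]
  have p7 : |x|^7 ≤ (1/125)*x^4 := by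
    have h3 : |x|^3 ≤ (1/5)^3 := pow_le_pow_left₀ hX0 hX1 3
    calc |x|^7 = |x|^3*|x|^4 := by ring
      _ ≤ (1/125)*|x|^4 := mul_le_mul_of_nonneg_right (by nlinarith) (by positivity)
      _ = (1/125)*x^4 := by rw [hx4]
  have p9 : |x|^9 ≤ (1/3125)*x^4 := by
    have h5 : |x|^5 ≤ (1/5)^5 := pow_le_pow_left₀ hX0 hX1 5
    calc |x|^9 = |x|^5*|x|^4 := by ring
      _ ≤ (1/3125)*|x|^4 := mul_le_mul_of_nonneg_right (by nlinarith) (by positivity)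
      _ = (1/3125)*x^4 := by rw [hx4]
  have hu : |x^3 + a| ≤ 2*|x|^3 := by
    calc |x^3+a| ≤ |x^3| + |a| := abs_add_le _ _
      _ ≤ |x|^3 + K*x^4 := by rw [hx3]; linarith
      _ ≤ 2*|x|^3 := by
          have e : K*x^4 = (K*|x|)*|x|^3 := by rw [hx4]; ring
          have := mul_le_mul_of_nonneg_right hKX (pow_nonneg hX0 3)
          linarith [pow_nonneg hX0 3]
  have hu0 : 0 ≤ |x^3+a| := abs_nonneg _
  have hyb : |y| ≤ 2*|x| := by
    have hc : |x|^3 ≤ (1/25)*|x| := by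
      have h2 : |x|^2 ≤ (1/5)^2 := pow_le_pow_left₀ hX0 hX1 2
      calc |x|^3 = |x|^2*|x| := by ring
        _ ≤ (1/25)*|x| := mul_le_mul_of_nonneg_right (by nlinarith) hX0
    rw [hy]
    calc |(-(1+α₀)*x + (x^3+a))| ≤ |(-(1+α₀))*x| + |x^3+a| := abs_add_le _ _
      _ = (1+α₀)*|x| + |x^3+a| := by rw [abs_mul, abs_neg, abs_of_nonneg (by linarith)]
      _ ≤ 2*|x| := by linarith [hu, mul_le_mul_of_nonneg_right hα₀1 hX0]
  have hb2 : |b| ≤ 16*(K*x^4) := by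
    have h1 : y^2 ≤ 4*x^2 := by
      have := pow_le_pow_left₀ (abs_nonneg y) hyb 2
      calc y^2 = |y|^2 := (sq_abs y).symm
        _ ≤ (2*|x|)^2 := this
        _ = 4*x^2 := by rw [hx2]; ring
    have hy4 : y^4 ≤ 16*x^4 := by
      have := pow_le_pow_left₀ (sq_nonneg y) h1 2
      calc y^4 = (y^2)^2 := by ring
        _ ≤ (4*x^2)^2 := this
        _ = 16*x^4 := by ring
    calc |b| ≤ K*y^4 := hb
      _ ≤ 16*(K*x^4) := by
          have := mul_le_mul_of_nonneg_left hy4 hK.le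
          linarith
  have hEeq : (-(1+α₁)*y + y^3 + b) - x - ((α₀+α₁)*x - 2*x^3) =
      α₀*α₁*x + (-(α₁*x^3)) + (-((1+α₁)*a)) + (-((3*α₀+3*α₀^2+α₀^3)*x^3))
      + 3*(1+α₀)^2*x^2*(x^3+a) + (-(3*(1+α₀)*x*(x^3+a)^2)) + ((x^3+a)^3) + b := by
    rw [hy]; ring
  rw [hEeq]
  refine le_trans (abs_sum8 _ _ _ _ _ _ _ _) ?_
  have h1 : |α₀*α₁*x| ≤ (α₀+α₁)^2*|x| := by
    rw [abs_mul, abs_of_nonneg (mul_nonneg h00 h10)]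
    exact mul_le_mul_of_nonneg_right (by linarith [sq_nonneg (α₀-α₁), mul_nonneg h00 h10]) hX0
  have h2 : |(-(α₁*x^3))| ≤ (α₀+α₁)*|x|^3 := by
    rw [abs_neg, abs_mul, abs_of_nonneg h10, hx3]
    exact mul_le_mul_of_nonneg_right (by linarith) (by positivity)
  have h3 : |(-((1+α₁)*a))| ≤ 2*(K*x^4) := by
    rw [abs_neg, abs_mul, abs_of_nonneg (by linarith : (0:ℝ) ≤ 1+α₁)]
    calc (1+α₁) * |a| ≤ (1+α₁) * (K*x^4) := mul_le_mul_of_nonneg_left ha (by linarith)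
      _ ≤ 2*(K*x^4) := by
          linarith [mul_le_mul_of_nonneg_right (show α₁ ≤ 1 by linarith) (mul_nonneg hK.le hx40)]
  have h4 : |(-((3*α₀+3*α₀^2+α₀^3)*x^3))| ≤ 4*(α₀+α₁)*|x|^3 := by
    rw [abs_neg, abs_mul, hx3, abs_of_nonneg (by positivity : (0:ℝ) ≤ 3*α₀+3*α₀^2+α₀^3)]
    have : 3*α₀+3*α₀^2+α₀^3 ≤ 4*(α₀+α₁) := by linarith [hc2, hc3]
    exact mul_le_mul_of_nonneg_right this (by positivity)
  have h5 : |3*(1+α₀)^2*x^2*(x^3+a)| ≤ 2*x^4 := by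
    calc |3*(1+α₀)^2*x^2*(x^3+a)| = 3*(1+α₀)^2*x^2 * |x^3+a| := by
          rw [abs_mul, abs_of_nonneg (by positivity : (0:ℝ) ≤ 3*(1+α₀)^2*x^2)]
      _ ≤ 3*(1+α₀)^2*x^2 * (2*|x|^3) := mul_le_mul_of_nonneg_left hu (by positivity)
      _ = 6*(1+α₀)^2 * |x|^5 := by rw [hx2]; ring
      _ ≤ 7*|x|^5 :=
          mul_le_mul_of_nonneg_right (by linarith [hc2] : 6*(1+α₀)^2 ≤ 7) (pow_nonneg hX0 5)
      _ ≤ 2*x^4 := by linarith [p5]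
  have h6 : |(-(3*(1+α₀)*x*(x^3+a)^2))| ≤ 1*x^4 := by
    have hu2 : |x^3+a|^2 ≤ 4*|x|^6 := by
      have := pow_le_pow_left₀ hu0 hu 2
      calc |x^3+a|^2 ≤ (2*|x|^3)^2 := this
        _ = 4*|x|^6 := by ring
    calc |(-(3*(1+α₀)*x*(x^3+a)^2))| = 3*(1+α₀)*|x| *|x^3+a|^2 := by
          rw [abs_neg, abs_mul, abs_mul, abs_pow,
            abs_of_nonneg (by positivity : (0:ℝ) ≤ 3*(1+α₀))]
      _ ≤ 3*(1+α₀)*|x| *(4*|x|^6) := mul_le_mul_of_nonneg_left hu2 (by positivity)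
      _ = 12*(1+α₀) * |x|^7 := by ring
      _ ≤ 13*|x|^7 :=
          mul_le_mul_of_nonneg_right (by linarith : 12*(1+α₀) ≤ 13) (pow_nonneg hX0 7)
      _ ≤ 1*x^4 := by linarith [p7]
  have h7 : |((x^3+a)^3)| ≤ 1*x^4 := by
    calc |((x^3+a)^3)| = |x^3+a|^3 := abs_pow _ 3
      _ ≤ 8*|x|^9 := by
          have := pow_le_pow_left₀ hu0 hu 3
          calc |x^3+a|^3 ≤ (2*|x|^3)^3 := this
            _ = 8*|x|^9 := by ring
      _ ≤ 1*x^4 := by linarith [p9]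
  have hx30 : (0:ℝ) ≤ (α₀+α₁)*|x|^3 := by positivity
  have hKx40 : 0 ≤ K*x^4 := by positivity
  linarith
private lemma abs_sum7 (t1 t2 t3 t4 t5 t6 t7 : ℝ) :
    |t1+t2+t3+t4+t5+t6+t7| ≤ |t1|+|t2|+|t3|+|t4|+|t5|+|t6|+|t7| := by
  calc |t1+t2+t3+t4+t5+t6+t7| ≤ |t1+t2+t3+t4+t5+t6|+|t7| := abs_add_le _ _
    _ ≤ |t1+t2+t3+t4+t5|+|t6|+|t7| := by gcongr; exact abs_add_le _ _
    _ ≤ |t1+t2+t3+t4|+|t5|+|t6|+|t7| := by gcongr; exact abs_add_le _ _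
    _ ≤ |t1+t2+t3|+|t4|+|t5|+|t6|+|t7| := by gcongr; exact abs_add_le _ _
    _ ≤ |t1+t2|+|t3|+|t4|+|t5|+|t6|+|t7| := by gcongr; exact abs_add_le _ _
    _ ≤ |t1|+|t2|+|t3|+|t4|+|t5|+|t6|+|t7| := by gcongr; exact abs_add_le _ _

private lemma keyB (K w α₀ α₁ x a a' b' y : ℝ)
    (hK : 0 < K) (hw : 0 < w) (hw10 : w ≤ 1/10) (hKw : K*w ≤ 1/400)
    (h00 : 0 ≤ α₀) (h0γ : α₀ ≤ w^2) (h10 : 0 ≤ α₁) (h1γ : α₁ ≤ w^2)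
    (hx : |x| ≤ 2*w) (hy : y = -(1+α₀)*x + (x^3 + a)) (ha : |a| ≤ K*x^4)
    (ha' : |a'| ≤ K*|x|^3) (hb' : |b'| ≤ K*|y|^3) :
    |(-(1+α₁) + 3*y^2 + b') * (-(1+α₀) + 3*x^2 + a') - 1 - ((α₀+α₁) - 6*x^2)|
      ≤ w^2*(α₀+α₁) + 3*x^2 := by
  have hX0 : 0 ≤ |x| := abs_nonneg x
  have hx2 : x^2 = |x|^2 := (sq_abs x).symm
  have hx4 : x^4 = |x|^4 := by rw [← abs_pow]; exact (abs_of_nonneg (by positivity)).symm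
  have hx20 : (0:ℝ) ≤ x^2 := by positivity
  have hX1 : |x| ≤ 1/5 := by linarith
  have hw100 : w^2 ≤ 1/100 := by
    have := mul_le_mul hw10 hw10 hw.le (by norm_num)
    linarith [sq_nonneg w, this]
  have hα₀1 : α₀ ≤ 1/100 := by linarith
  have hα₁1 : α₁ ≤ 1/100 := by linarith
  have hKX : K*|x| ≤ 1/200 := by
    have := mul_le_mul_of_nonneg_left hx hK.le
    linarith
  have hx3 : |x^3| = |x|^3 := abs_pow x 3
  have hx225 : x^2 ≤ 1/25 := by
    have := mul_le_mul hX1 hX1 hX0 (by norm_num)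
    calc x^2 = |x| *|x| := by rw [hx2]; ring
      _ ≤ (1/5)*(1/5) := this
      _ = 1/25 := by norm_num
  have hX425 : |x|^4 ≤ (1/25)*x^2 := by
    have : |x|^2 ≤ 1/25 := by rw [← hx2]; exact hx225
    calc |x|^4 = |x|^2*|x|^2 := by ring
      _ ≤ (1/25)*|x|^2 := mul_le_mul_of_nonneg_right this (sq_nonneg _)
      _ = (1/25)*x^2 := by rw [hx2]
  have hX6 : |x|^6 ≤ (1/625)*x^2 := by
    have h4 : |x|^4 ≤ (1/5)^4 := pow_le_pow_left₀ hX0 hX1 4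
    calc |x|^6 = |x|^4*|x|^2 := by ring
      _ ≤ (1/625)*|x|^2 := mul_le_mul_of_nonneg_right (by linarith) (sq_nonneg _)
      _ = (1/625)*x^2 := by rw [hx2]
  have hu : |x^3 + a| ≤ 2*|x|^3 := by
    calc |x^3+a| ≤ |x^3| + |a| := abs_add_le _ _
      _ ≤ |x|^3 + K*x^4 := by rw [hx3]; linarith
      _ ≤ 2*|x|^3 := by
          have e : K*x^4 = (K*|x|)*|x|^3 := by rw [hx4]; ring
          have := mul_le_mul_of_nonneg_right hKX (pow_nonneg hX0 3)
          linarith [pow_nonneg hX0 3]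
  have hu0 : 0 ≤ |x^3+a| := abs_nonneg _
  have hyb : |y| ≤ 2*|x| := by
    have hc : |x|^3 ≤ (1/25)*|x| := by
      have h2 : |x|^2 ≤ (1/5)^2 := pow_le_pow_left₀ hX0 hX1 2
      calc |x|^3 = |x|^2*|x| := by ring
        _ ≤ (1/25)*|x| := mul_le_mul_of_nonneg_right (by linarith) hX0
    rw [hy]
    calc |(-(1+α₀)*x + (x^3+a))| ≤ |(-(1+α₀))*x| + |x^3+a| := abs_add_le _ _
      _ = (1+α₀)*|x| + |x^3+a| := by rw [abs_mul, abs_neg, abs_of_nonneg (by linarith)]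
      _ ≤ 2*|x| := by linarith [hu, mul_le_mul_of_nonneg_right hα₀1 hX0]
  have hy2 : y^2 ≤ 4*x^2 := by
    have := pow_le_pow_left₀ (abs_nonneg y) hyb 2
    calc y^2 = |y|^2 := (sq_abs y).symm
      _ ≤ (2*|x|)^2 := this
      _ = 4*x^2 := by rw [hx2]; ring
  have ha'' : |a'| ≤ (1/200)*x^2 := by
    have e : K*|x|^3 = (K*|x|)*x^2 := by rw [hx2]; ring
    have := mul_le_mul_of_nonneg_right hKX hx20
    linarith
  have hb'' : |b'| ≤ (1/25)*x^2 := by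
    have h8 : |y|^3 ≤ 8*|x|^3 := by
      have := pow_le_pow_left₀ (abs_nonneg y) hyb 3
      calc |y|^3 ≤ (2*|x|)^3 := this
        _ = 8*|x|^3 := by ring
    have h9 := mul_le_mul_of_nonneg_left h8 hK.le
    have e : K*(8*|x|^3) = 8*((K*|x|)*x^2) := by rw [hx2]; ring
    have := mul_le_mul_of_nonneg_right hKX hx20
    linarith
  have hp : |3*x^2+a'| ≤ 4*x^2 := by
    calc |3*x^2+a'| ≤ |3*x^2| + |a'| := abs_add_le _ _
      _ ≤ 4*x^2 := by rw [abs_of_nonneg (by positivity)]; linarith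
  have hq : |3*y^2+b'| ≤ 13*x^2 := by
    calc |3*y^2+b'| ≤ |3*y^2| + |b'| := abs_add_le _ _
      _ ≤ 13*x^2 := by rw [abs_of_nonneg (by positivity)]; linarith
  have hy2x : |y^2 - x^2| ≤ (1/5)*x^2 := by
    have e : y^2 - x^2 = (2*α₀+α₀^2)*x^2 + (-(2*(1+α₀)*x*(x^3+a))) + (x^3+a)^2 := by
      rw [hy]; ring
    rw [e]
    have hc2 : α₀^2 ≤ (1/100)*α₀ := by linarith [mul_le_mul_of_nonneg_left hα₀1 h00]
    have g1 : |(2*α₀+α₀^2)*x^2| ≤ (21/1000)*x^2 := by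
      rw [abs_mul, abs_of_nonneg (by positivity : (0:ℝ) ≤ 2*α₀+α₀^2), abs_of_nonneg hx20]
      exact mul_le_mul_of_nonneg_right (by linarith) hx20
    have g2 : |(-(2*(1+α₀)*x*(x^3+a)))| ≤ (165/1000)*x^2 := by
      calc |(-(2*(1+α₀)*x*(x^3+a)))| = 2*(1+α₀)*|x| * |x^3+a| := by
            rw [abs_neg, abs_mul, abs_mul, abs_of_nonneg (by linarith : (0:ℝ) ≤ 2*(1+α₀))]
        _ ≤ 2*(1+α₀)*|x| * (2*|x|^3) := mul_le_mul_of_nonneg_left hu (by positivity)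
        _ = 4*(1+α₀) * |x|^4 := by ring
        _ ≤ (404/100) * |x|^4 :=
            mul_le_mul_of_nonneg_right (by linarith) (by positivity)
        _ ≤ (165/1000)*x^2 := by
            have := mul_le_mul_of_nonneg_left hX425 (by norm_num : (0:ℝ) ≤ 404/100)
            linarith
    have g3 : |(x^3+a)^2| ≤ (7/1000)*x^2 := by
      have e2 : |(x^3+a)^2| = |x^3+a|^2 := abs_pow _ 2
      have e4 := pow_le_pow_left₀ hu0 hu 2
      have e3 : (2*|x|^3)^2 = 4*|x|^6 := by ring
      have e5 := mul_le_mul_of_nonneg_left hX6 (by norm_num : (0:ℝ) ≤ 4)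
      linarith
    calc |(2*α₀+α₀^2)*x^2 + (-(2*(1+α₀)*x*(x^3+a))) + (x^3+a)^2|
        ≤ |(2*α₀+α₀^2)*x^2 + (-(2*(1+α₀)*x*(x^3+a)))| + |(x^3+a)^2| := abs_add_le _ _
      _ ≤ |(2*α₀+α₀^2)*x^2| + |(-(2*(1+α₀)*x*(x^3+a)))| + |(x^3+a)^2| := by
          gcongr; exact abs_add_le _ _
      _ ≤ (1/5)*x^2 := by linarith
  have hEeq : (-(1+α₁) + 3*y^2 + b') * (-(1+α₀) + 3*x^2 + a') - 1 - ((α₀+α₁) - 6*x^2) =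
      α₀*α₁ + (-(α₁*(3*x^2+a'))) + (-(α₀*(3*y^2+b'))) + ((3*x^2+a')*(3*y^2+b'))
      + (-a') + (-b') + (-(3*(y^2-x^2))) := by ring
  rw [hEeq]
  refine le_trans (abs_sum7 _ _ _ _ _ _ _) ?_
  have g1 : |α₀*α₁| ≤ w^2*(α₀+α₁) := by
    rw [abs_of_nonneg (mul_nonneg h00 h10)]
    linarith [mul_le_mul_of_nonneg_right h0γ h10, mul_nonneg (sq_nonneg w) h00]
  have g2 : |(-(α₁*(3*x^2+a')))| ≤ (4/100)*x^2 := by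
    rw [abs_neg, abs_mul, abs_of_nonneg h10]
    calc α₁ * |3*x^2+a'| ≤ (1/100) * (4*x^2) :=
          mul_le_mul hα₁1 hp (abs_nonneg _) (by norm_num)
      _ = (4/100)*x^2 := by ring
  have g3 : |(-(α₀*(3*y^2+b')))| ≤ (13/100)*x^2 := by
    rw [abs_neg, abs_mul, abs_of_nonneg h00]
    calc α₀ * |3*y^2+b'| ≤ (1/100) * (13*x^2) :=
          mul_le_mul hα₀1 hq (abs_nonneg _) (by norm_num)
      _ = (13/100)*x^2 := by ring
  have g4 : |(3*x^2+a')*(3*y^2+b')| ≤ (208/100)*x^2 := by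
    rw [abs_mul]
    calc |3*x^2+a'| * |3*y^2+b'| ≤ (4*x^2) * (13*x^2) :=
          mul_le_mul hp hq (abs_nonneg _) (by positivity)
      _ = 52*(x^2*x^2) := by ring
      _ ≤ 52*((1/25)*x^2) := by
          have := mul_le_mul_of_nonneg_right hx225 hx20
          linarith
      _ = (208/100)*x^2 := by ring
  have g5 : |(-a')| ≤ (1/200)*x^2 := by rw [abs_neg]; exact ha''
  have g6 : |(-b')| ≤ (1/25)*x^2 := by rw [abs_neg]; exact hb''
  have g7 : |(-(3*(y^2-x^2)))| ≤ (3/5)*x^2 := by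
    rw [abs_neg, abs_mul, abs_of_nonneg (by norm_num : (0:ℝ) ≤ 3)]
    linarith
  linarith
private lemma divX (M s x : ℝ) (hx0 : x ≠ 0) (hM : 0 ≤ M)
    (h : |s*x - 2*x^3| ≤ s^2*|x| + 8*s*|x|^3 + M*x^4) :
    |s - 2*x^2| ≤ s^2 + 8*s*x^2 + (M*|x|)*x^2 := by
  have hX : 0 < |x| := abs_pos.mpr hx0
  have hx2 : x^2 = |x|^2 := (sq_abs x).symm
  have hx4 : x^4 = |x|^4 := by rw [← abs_pow]; exact (abs_of_nonneg (by positivity)).symm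
  have e1 : |s*x - 2*x^3| = |s - 2*x^2| * |x| := by
    rw [← abs_mul]; ring_nf
  have e2 : s^2*|x| + 8*s*|x|^3 + M*x^4 = (s^2 + 8*s*x^2 + (M*|x|)*x^2) * |x| := by
    rw [hx2, hx4]; ring
  rw [e1, e2] at h
  exact (mul_le_mul_iff_of_pos_right hX).mp h

private lemma winlem (M w s x : ℝ) (hM : 0 < M) (hMw : M*w ≤ 1/10) (hw : 0 < w)
    (hw10 : w ≤ 1/10) (hs0 : 0 ≤ s) (hs : s ≤ 2*w^2) (hx : |x| ≤ 2*w)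
    (hd : |s - 2*x^2| ≤ s^2 + 8*s*x^2 + (M*|x|)*x^2) :
    37/100*s ≤ x^2 ∧ x^2 ≤ 63/100*s := by
  obtain ⟨hd1, hd2⟩ := abs_le.mp hd
  have hx20 : (0:ℝ) ≤ x^2 := sq_nonneg x
  have hw100 : w^2 ≤ 1/100 := by nlinarith
  have hs50 : s ≤ 1/50 := by linarith
  have hs2 : s^2 ≤ (1/50)*s := by nlinarith
  have hMX : M*|x| ≤ 1/5 := by
    have := mul_le_mul_of_nonneg_left hx hM.le
    nlinarith
  have hMXx : (M*|x|)*x^2 ≤ (1/5)*x^2 := mul_le_mul_of_nonneg_right hMX hx20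
  have h8 : 8*s*x^2 ≤ (8/50)*x^2 := by nlinarith
  have hup : x^2 ≤ 63/100*s := by linarith
  have h8' : 8*s*x^2 ≤ 8*s*(63/100*s) := by nlinarith
  have h8'' : 8*s*(63/100*s) ≤ (504/5000)*s := by nlinarith
  have hMXx' : (M*|x|)*x^2 ≤ (1/5)*(63/100*s) := by
    have h2 : (M*|x|)*x^2 ≤ (1/5)*x^2 := hMXx
    nlinarith [mul_nonneg (mul_nonneg hM.le (abs_nonneg x)) hx20]
  exact ⟨by linarith, hup⟩

private lemma zerolem (M w x : ℝ) (hM : 0 < M) (hMw : M*w ≤ 1/10) (hw : 0 < w)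
    (hx : |x| ≤ 2*w) (hx0 : x ≠ 0)
    (hd : |(0:ℝ) - 2*x^2| ≤ 0^2 + 8*0*x^2 + (M*|x|)*x^2) : False := by
  have hx2 : 0 < x^2 := by positivity
  have hMX : M*|x| ≤ 1/5 := by
    have := mul_le_mul_of_nonneg_left hx hM.le
    nlinarith
  have h1 : |(0:ℝ) - 2*x^2| = 2*x^2 := by
    rw [show (0:ℝ) - 2*x^2 = -(2*x^2) by ring, abs_neg, abs_of_nonneg (by positivity)]
  nlinarith [mul_le_mul_of_nonneg_right hMX hx2.le]

private lemma critlem (w s c : ℝ) (hw : 0 < w) (hw10 : w ≤ 1/10) (hs0 : 0 ≤ s)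
    (h : |s - 6*c^2| ≤ w^2*s + 3*c^2) : c^2 ≤ 34/100*s := by
  obtain ⟨h1, h2⟩ := abs_le.mp h
  have hw100 : w^2 ≤ 1/100 := by nlinarith
  nlinarith [sq_nonneg c]

private lemma loclem (M w s σ v ρ : ℝ) (hM56 : 56 ≤ M) (hMw : M*w ≤ 1/10)
    (hw : 0 < w) (hw10 : w ≤ 1/10) (hs : 0 < s) (hs2 : s ≤ 2*w^2)
    (hσ0 : 0 ≤ σ) (hσ2 : σ^2 = s) (hv0 : 0 ≤ v) (hv2 : v^2 = s/2) (hρ : 0 < ρ)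
    (h37 : 37/100*s ≤ ρ^2) (h63 : ρ^2 ≤ 63/100*s)
    (hd : |s - 2*ρ^2| ≤ s^2 + 8*s*ρ^2 + (M*ρ)*ρ^2) : |ρ - v| ≤ M*s := by
  have hσp : 0 < σ := by
    rcases lt_or_eq_of_le hσ0 with h | h
    · exact h
    · exfalso; rw [← h] at hσ2; simp at hσ2; linarith [hσ2 ▸ hs]
  have hw100 : w^2 ≤ 1/100 := by nlinarith
  have hσ15 : σ ≤ 15/100 := by nlinarith [sq_nonneg (σ - 15/100)]
  have hρσ : ρ ≤ (8/10)*σ := by nlinarith [sq_nonneg (ρ - (8/10)*σ), sq_nonneg (ρ + (8/10)*σ)]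
  have hρσ' : (6/10)*σ ≤ ρ := by nlinarith [sq_nonneg (ρ - (6/10)*σ), sq_nonneg (ρ + (6/10)*σ)]
  have hv7 : (7/10)*σ ≤ v := by nlinarith [sq_nonneg (v - (7/10)*σ), sq_nonneg (v + (7/10)*σ)]
  have hvσ : v ≤ σ := by nlinarith [sq_nonneg (v - σ), sq_nonneg (v + σ)]
  have hsσ : s ≤ (15/100)*σ := by nlinarith
  have hMs0 : 0 ≤ M*s := by nlinarith
  -- bound the right side by (52/100)*M*s*σ
  have hb : s^2 + 8*s*ρ^2 + (M*ρ)*ρ^2 ≤ (60/100)*(M*s*σ) := by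
    have b1 : s^2 ≤ (15/100)*(s*σ) := by nlinarith
    have b2 : 8*s*ρ^2 ≤ 8*s*(63/100*s) := by nlinarith
    have b2' : 8*s*(63/100*s) ≤ (504/100)*((15/100)*(s*σ)) := by nlinarith
    have hMpos : (0:ℝ) ≤ M := by linarith
    have b3 : (M*ρ)*ρ^2 ≤ (M*((8/10)*σ))*(63/100*s) := by
      have hh := mul_le_mul_of_nonneg_left hρσ hMpos
      exact mul_le_mul hh h63 (sq_nonneg ρ) (by positivity)
    have hMsσ : 56*(s*σ) ≤ M*(s*σ) :=
      mul_le_mul_of_nonneg_right hM56 (mul_nonneg hs.le hσp.le)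
    nlinarith [hMsσ]
  obtain ⟨hd1, hd2⟩ := abs_le.mp hd
  have hsum : 13/10*σ ≤ ρ + v := by linarith
  rw [abs_le]
  constructor
  · -- -(M*s) ≤ ρ - v
    rcases le_or_gt v ρ with h | h
    · linarith
    · have h1 : (v - ρ)*(13/10*σ) ≤ (v - ρ)*(ρ + v) := by
        apply mul_le_mul_of_nonneg_left hsum (by linarith)
      have h2 : (v - ρ)*(ρ + v) = v^2 - ρ^2 := by ring
      have h3 : v^2 - ρ^2 ≤ (30/100)*(M*s*σ) := by
        have : 2*(v^2 - ρ^2) = s - 2*ρ^2 := by rw [hv2]; ring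
        linarith
      have h4 : (v - ρ)*(13/10*σ) ≤ ((30/100)*(M*s))*σ := by nlinarith
      have h5 : v - ρ ≤ (24/100)*(M*s) := by
        by_contra hcon
        push_neg at hcon
        have := mul_lt_mul_of_pos_right hcon hσp
        nlinarith
      linarith
  · rcases le_or_gt ρ v with h | h
    · linarith
    · have h1 : (ρ - v)*(13/10*σ) ≤ (ρ - v)*(ρ + v) := by
        apply mul_le_mul_of_nonneg_left hsum (by linarith)
      have h2 : (ρ - v)*(ρ + v) = ρ^2 - v^2 := by ring
      have h3 : ρ^2 - v^2 ≤ (30/100)*(M*s*σ) := by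
        have : 2*(ρ^2 - v^2) = 2*ρ^2 - s := by rw [hv2]; ring
        linarith
      have h5 : ρ - v ≤ (24/100)*(M*s) := by
        by_contra hcon
        push_neg at hcon
        have := mul_lt_mul_of_pos_right hcon hσp
        nlinarith
      linarith

private lemma signR (M w s φ : ℝ) (hM56 : 56 ≤ M) (hMw : M*w ≤ 1/10) (hw : 0 < w)
    (hw10 : w ≤ 1/10) (hs0 : 0 ≤ s) (hs : s ≤ 2*w^2)
    (h : |φ - (s*(2*w) - 2*(2*w)^3)| ≤ s^2*(2*w) + 8*s*(2*w)^3 + M*(2*w)^4) : φ < 0 := by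
  obtain ⟨h1, h2⟩ := abs_le.mp h
  have hw100 : w^2 ≤ 1/100 := by nlinarith
  have a1 : s^2 ≤ 2*w^2*s := by nlinarith
  have a2 : s*w^2 ≤ 2*w^2*w^2 := by nlinarith [sq_nonneg w]
  have a3 : w^2*w^2 ≤ (1/100)*w^2 := by nlinarith [sq_nonneg w]
  have a4 : M*(2*w)^4 = 16*((M*w)*(w*w^2)) := by ring
  have a5 : (M*w)*(w*w^2) ≤ (1/10)*(w*w^2) := by
    apply mul_le_mul_of_nonneg_right hMw (by positivity)
  have a6 : w*w^2 ≤ (1/10)*w^2 := by nlinarith [sq_nonneg w]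
  nlinarith [mul_pos hw hw, mul_nonneg hs0 hw.le, mul_pos (mul_pos hw hw) hw]

private lemma signP (M w s x φ : ℝ) (hM56 : 56 ≤ M) (hMw : M*w ≤ 1/10) (hw : 0 < w)
    (hw10 : w ≤ 1/10) (hs : 0 < s) (hx0 : 0 < x) (hx2 : x^2 = s/4) (hxw : x ≤ w)
    (h : |φ - (s*x - 2*x^3)| ≤ s^2*x + 8*s*x^3 + M*x^4) : 0 < φ := by
  obtain ⟨h1, h2⟩ := abs_le.mp h
  have hs4 : s = 4*x^2 := by linarith
  have e1 : s*x = 4*x^3 := by rw [hs4]; ring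
  have e2 : s^2*x = 16*(x^2*x^3) := by rw [hs4]; ring
  have e3 : 8*s*x^3 = 32*(x^2*x^3) := by rw [hs4]; ring
  have e4 : M*x^4 = (M*x)*x^3 := by ring
  have hx3 : 0 < x^3 := by positivity
  have hxx : x^2 ≤ 1/100 := by nlinarith
  have b1 : 16*(x^2*x^3) ≤ (16/100)*x^3 := by nlinarith
  have b2 : 32*(x^2*x^3) ≤ (32/100)*x^3 := by nlinarith
  have b3 : (M*x)*x^3 ≤ (1/10)*x^3 := by
    have : M*x ≤ M*w := by nlinarith
    nlinarith
  nlinarith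

/-- Monotonicity and fixed points of the composed flip-bifurcation maps.
For `f_α(x) = -(1+α)x + x³ + r_α(x)` with quantified fourth-order remainders, for all
small `γ > 0` and `α₀, α₁ ∈ [0, γ]` the composite `f_{α₁} ∘ f_{α₀}` is strictly increasing
on `[-2√γ, 2√γ]`, and its fixed points there are exactly `0` (if `α₀+α₁ = 0`), resp.
`0, ξ₋, ξ₊` with `ξ± = ±√((α₀+α₁)/2) + O(α₀+α₁)` (if `α₀+α₁ > 0`). -/
theorem stmt_5
    (δ K : ℝ) (hδ : 0 < δ) (hK : 0 < K)
    (r r' : ℝ → ℝ → ℝ)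
    (hr : ∀ α ∈ Set.Icc (0 : ℝ) δ, ∀ x ∈ Set.Icc (-δ) δ,
      HasDerivAt (r α) (r' α x) x ∧ |r α x| ≤ K * x ^ 4 ∧ |r' α x| ≤ K * |x| ^ 3)
    (f : ℝ → ℝ → ℝ)
    (hf : ∀ α x : ℝ, f α x = -(1 + α) * x + x ^ 3 + r α x) :
    ∃ γ₀ C : ℝ, 0 < γ₀ ∧ 0 < C ∧
      ∀ γ : ℝ, 0 < γ → γ ≤ γ₀ →
        ∀ α₀ ∈ Set.Icc (0 : ℝ) γ, ∀ α₁ ∈ Set.Icc (0 : ℝ) γ,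
          StrictMonoOn (fun x => f α₁ (f α₀ x))
            (Set.Icc (-(2 * Real.sqrt γ)) (2 * Real.sqrt γ)) ∧
          (α₀ + α₁ = 0 →
            ∀ x ∈ Set.Icc (-(2 * Real.sqrt γ)) (2 * Real.sqrt γ),
              (f α₁ (f α₀ x) = x ↔ x = 0)) ∧
          (0 < α₀ + α₁ →
            ∃ ξm ξp : ℝ, ξm < 0 ∧ 0 < ξp ∧
              ξm ∈ Set.Icc (-(2 * Real.sqrt γ)) (2 * Real.sqrt γ) ∧
              ξp ∈ Set.Icc (-(2 * Real.sqrt γ)) (2 * Real.sqrt γ) ∧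
              |ξp - Real.sqrt ((α₀ + α₁) / 2)| ≤ C * (α₀ + α₁) ∧
              |ξm + Real.sqrt ((α₀ + α₁) / 2)| ≤ C * (α₀ + α₁) ∧
              ∀ x ∈ Set.Icc (-(2 * Real.sqrt γ)) (2 * Real.sqrt γ),
                (f α₁ (f α₀ x) = x ↔ x = 0 ∨ x = ξm ∨ x = ξp)) := by
  refine ⟨min (δ^2/16) (min δ (min (1/100) (1/(100*(700+40*K)^2)))), 700+40*K,
    by positivity, by positivity, ?_⟩
  intro γ hγ hγle α₀ hα₀ α₁ hα₁
  obtain ⟨hα₀0, hα₀γ⟩ := hα₀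
  obtain ⟨hα₁0, hα₁γ⟩ := hα₁
  obtain ⟨L, hLdef⟩ : ∃ L : ℝ, L = 700 + 40 * K := ⟨_, rfl⟩
  rw [← hLdef] at hγle ⊢
  have hLpos : 0 < L := by rw [hLdef]; positivity
  obtain ⟨w, hwdef⟩ : ∃ w : ℝ, w = Real.sqrt γ := ⟨_, rfl⟩
  rw [← hwdef]
  have hw : 0 < w := hwdef ▸ Real.sqrt_pos.mpr hγ
  have hw2 : w^2 = γ := hwdef ▸ Real.sq_sqrt hγ.le
  have hγ100 : γ ≤ 1/100 := hγle.trans (le_trans (min_le_right _ _)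
    (le_trans (min_le_right _ _) (min_le_left _ _)))
  have hγδ : γ ≤ δ := hγle.trans (le_trans (min_le_right _ _) (min_le_left _ _))
  have hγL : γ ≤ 1/(100*L^2) := hγle.trans (le_trans (min_le_right _ _)
    (le_trans (min_le_right _ _) (min_le_right _ _)))
  have hγδ2 : γ ≤ δ^2/16 := hγle.trans (min_le_left _ _)
  have hLw : L * w ≤ 1/10 := by
    have h0 : γ * (100 * L^2) ≤ 1 := by
      have := (le_div_iff₀ (show (0:ℝ) < 100 * L^2 by positivity)).mp hγL
      linarith
    have h1 : (L*w)^2 ≤ 1/100 := by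
      calc (L*w)^2 = L^2 * w^2 := by ring
        _ = (γ * (100 * L^2))/100 := by rw [hw2]; ring
        _ ≤ 1/100 := by linarith
    linarith [sq_nonneg (L*w - 1/10), h1]
  have hw10 : w ≤ 1/10 := by linarith [sq_nonneg (w - 1/10)]
  have h4wδ : 4 * w ≤ δ := by
    have h1 : (4*w)*δ ≤ δ*δ := by linarith [sq_nonneg (4*w - δ)]
    exact (mul_le_mul_iff_of_pos_right hδ).mp h1
  have hKw : K * w ≤ 1/400 := by
    have h1 : 40*(K*w) ≤ L*w := by rw [hLdef]; linarith [hw.le, mul_nonneg hK.le hw.le]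
    linarith [mul_nonneg hK.le hw.le]
  obtain ⟨s, hsdef⟩ : ∃ s : ℝ, s = α₀ + α₁ := ⟨_, rfl⟩
  rw [← hsdef]
  have hs0 : 0 ≤ s := by rw [hsdef]; positivity
  have hs2γ : s ≤ 2*γ := by rw [hsdef]; linarith
  obtain ⟨M, hMdef⟩ : ∃ M : ℝ, M = 18*K + 56 := ⟨_, rfl⟩
  have hMpos : 0 < M := by rw [hMdef]; positivity
  have hML : M ≤ L := by rw [hLdef, hMdef]; linarith [hK.le]
  have hMw : M * w ≤ 1/10 := le_trans (mul_le_mul_of_nonneg_right hML hw.le) hLw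
  -- specialized remainder facts
  have hrα : ∀ α, 0 ≤ α → α ≤ γ → ∀ z : ℝ, |z| ≤ 4*w →
      HasDerivAt (r α) (r' α z) z ∧ |r α z| ≤ K * z ^ 4 ∧ |r' α z| ≤ K * |z| ^ 3 := by
    intro α h0 h1 z hz
    exact hr α ⟨h0, le_trans h1 hγδ⟩ z (abs_le.mp (hz.trans h4wδ))
  -- derivative of f α
  have hfd : ∀ α, 0 ≤ α → α ≤ γ → ∀ z : ℝ, |z| ≤ 4*w →
      HasDerivAt (f α) (-(1+α) + 3*z^2 + r' α z) z := by
    intro α h0 h1 z hz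
    have hfa : f α = fun z => -(1+α)*z + z^3 + r α z := funext (hf α)
    rw [hfa]
    have h1' : HasDerivAt (fun z : ℝ => -(1+α)*z) (-(1+α)) z := by
      simpa using (hasDerivAt_id z).const_mul (-(1+α))
    have h2' : HasDerivAt (fun z : ℝ => z^3) (3*z^2) z := by
      simpa using hasDerivAt_pow 3 z
    exact (h1'.add h2').add (hrα α h0 h1 z hz).1
  -- derivative window
  have hfdw : ∀ α, 0 ≤ α → α ≤ γ → ∀ z : ℝ, |z| ≤ 4*w →
      -(3/2) ≤ -(1+α) + 3*z^2 + r' α z ∧ -(1+α) + 3*z^2 + r' α z ≤ -(1/2) := by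
    intro α h0 h1 z hz
    have hb := (hrα α h0 h1 z hz).2.2
    obtain ⟨hb1, hb2⟩ := abs_le.mp hb
    have hz0 : 0 ≤ |z| := abs_nonneg z
    have hz2 : z^2 ≤ 16*w^2 := by
      have := mul_le_mul hz hz (abs_nonneg z) (by positivity)
      linarith [sq_abs z]
    have h64 : |z|^3 ≤ 64*w^3 := by
      have := pow_le_pow_left₀ (abs_nonneg z) hz 3
      linarith [this]
    have hz3 : K * |z|^3 ≤ 64 * ((K*w) * w^2) := by
      have := mul_le_mul_of_nonneg_left h64 hK.le
      linarith [this]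
    have hw3 : (K*w) * w^2 ≤ (1/400) * (1/100) := by
      have h2 : w^2 ≤ 1/100 := by linarith [hw2]
      exact mul_le_mul hKw h2 (sq_nonneg w) (by norm_num)
    constructor <;> linarith [sq_nonneg z, pow_nonneg (abs_nonneg z) 3, hw2]
  -- size bound of f α on the (doubled) domain
  have hfb : ∀ α, 0 ≤ α → α ≤ γ → ∀ z : ℝ, |z| ≤ 4*w → |f α z| ≤ 2*|z| := by
    intro α h0 h1 z hz
    obtain ⟨hb1, hb2⟩ := abs_le.mp (hrα α h0 h1 z hz).2.1
    have hz3a : z^3 ≤ |z|^3 := by rw [← abs_pow]; exact le_abs_self _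
    have hz3b : -(|z|^3) ≤ z^3 := by rw [← abs_pow]; exact neg_abs_le _
    have hz4 : z^4 = |z|^4 := by rw [← abs_pow]; rw [abs_of_nonneg (by positivity)]
    have hz0 : 0 ≤ |z| := abs_nonneg z
    have hzz : z^2 = |z|^2 := (sq_abs z).symm
    have hz16 : |z|^2 ≤ 16*w^2 := by
      have := mul_le_mul hz hz hz0 (by positivity)
      linarith [sq_abs z, this]
    have hcube : |z|^3 ≤ (16*w^2) * |z| := by
      have := mul_le_mul_of_nonneg_right hz16 hz0
      calc |z|^3 = |z|^2 * |z| := by ring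
        _ ≤ (16*w^2) * |z| := this
    have hw2z : w^2 * |z| ≤ (1/100) * |z| :=
      mul_le_mul_of_nonneg_right (by linarith [hw2] : w^2 ≤ 1/100) hz0
    have hquart : K * z^4 ≤ (1/100) * |z| := by
      have c1 : K * |z| ≤ 1/100 := by
        have := mul_le_mul_of_nonneg_left hz hK.le
        linarith
      have c2 := mul_le_mul c1 hcube (pow_nonneg hz0 3) (by norm_num)
      have e : K * z^4 = (K * |z|) * |z|^3 := by rw [hz4]; ring
      linarith [e, c2, hw2z]
    have hα100 : α ≤ 1/100 := by linarith
    have hαz1 : α * (-|z|) ≤ α * z := mul_le_mul_of_nonneg_left (neg_abs_le z) h0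
    have hαz2 : α * z ≤ α * |z| := mul_le_mul_of_nonneg_left (le_abs_self z) h0
    have hαz3 : α * |z| ≤ (1/100) * |z| := mul_le_mul_of_nonneg_right hα100 hz0
    rw [abs_le, hf]
    constructor <;> linarith [le_abs_self z, neg_abs_le z, hz3a, hz3b, hcube, hquart,
      hαz1, hαz2, hαz3, hw2z]
  have hα₀w : α₀ ≤ w^2 := by rw [hw2]; exact hα₀γ
  have hα₁w : α₁ ≤ w^2 := by rw [hw2]; exact hα₁γ
  have hM56 : (56:ℝ) ≤ M := by rw [hMdef]; linarith [hK.le]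
  have hs2w : s ≤ 2*w^2 := by rw [hw2]; exact hs2γ
  have hI : ∀ x : ℝ, x ∈ Set.Icc (-(2*w)) (2*w) ↔ |x| ≤ 2*w := by
    intro x; rw [Set.mem_Icc, ← abs_le]
  have hx24 : ∀ x : ℝ, |x| ≤ 2*w → |x| ≤ 4*w := by intro x h; linarith
  have hyw : ∀ x : ℝ, |x| ≤ 2*w → |f α₀ x| ≤ 4*w := by
    intro x h
    have := hfb α₀ hα₀0 hα₀γ x (hx24 x h)
    linarith
  have hgd : ∀ x : ℝ, |x| ≤ 2*w → HasDerivAt (fun z => f α₁ (f α₀ z))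
      ((-(1+α₁) + 3*(f α₀ x)^2 + r' α₁ (f α₀ x)) * (-(1+α₀) + 3*x^2 + r' α₀ x)) x := by
    intro x hx
    have h0 := hfd α₀ hα₀0 hα₀γ x (hx24 x hx)
    have h1 := hfd α₁ hα₁0 hα₁γ (f α₀ x) (hyw x hx)
    exact h1.comp x h0
  have hgdpos : ∀ x : ℝ, |x| ≤ 2*w → (1:ℝ)/4 ≤
      (-(1+α₁) + 3*(f α₀ x)^2 + r' α₁ (f α₀ x)) * (-(1+α₀) + 3*x^2 + r' α₀ x) := by
    intro x hx
    obtain ⟨d0a, d0b⟩ := hfdw α₀ hα₀0 hα₀γ x (hx24 x hx)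
    obtain ⟨d1a, d1b⟩ := hfdw α₁ hα₁0 hα₁γ (f α₀ x) (hyw x hx)
    have h1 : (1:ℝ)/2 ≤ -(-(1+α₁) + 3*(f α₀ x)^2 + r' α₁ (f α₀ x)) := by linarith
    have h2 : (1:ℝ)/2 ≤ -(-(1+α₀) + 3*x^2 + r' α₀ x) := by linarith
    have h3 := mul_le_mul h1 h2 (by norm_num) (by linarith)
    linarith [h3]
  have hgc : ContinuousOn (fun z => f α₁ (f α₀ z)) (Set.Icc (-(2*w)) (2*w)) := by
    intro x hx
    exact ((hgd x ((hI x).mp hx)).continuousAt).continuousWithinAt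
  have hmono : StrictMonoOn (fun z => f α₁ (f α₀ z)) (Set.Icc (-(2*w)) (2*w)) := by
    apply strictMonoOn_of_deriv_pos (convex_Icc _ _) hgc
    intro x hx
    rw [interior_Icc, Set.mem_Ioo] at hx
    have hx' : |x| ≤ 2*w := by rw [abs_le]; constructor <;> linarith [hx.1, hx.2]
    rw [(hgd x hx').deriv]
    linarith [hgdpos x hx']
  have hr0 : ∀ α, 0 ≤ α → α ≤ γ → r α 0 = 0 := by
    intro α h0 h1
    have h2 := (hrα α h0 h1 0 (by rw [abs_zero]; positivity)).2.1
    have h3 : K * (0:ℝ)^4 = 0 := by norm_num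
    rw [h3] at h2
    exact abs_nonpos_iff.mp h2
  have hg0 : f α₁ (f α₀ 0) = 0 := by
    have h0 : f α₀ 0 = 0 := by rw [hf, hr0 α₀ hα₀0 hα₀γ]; ring
    rw [h0, hf, hr0 α₁ hα₁0 hα₁γ]; ring
  have key : ∀ x : ℝ, |x| ≤ 2*w →
      |f α₁ (f α₀ x) - x - (s*x - 2*x^3)| ≤ s^2*|x| + 8*s*|x|^3 + M*x^4 := by
    intro x hx
    have hy : f α₀ x = -(1+α₀)*x + (x^3 + r α₀ x) := by rw [hf]; ring
    have ha := (hrα α₀ hα₀0 hα₀γ x (hx24 x hx)).2.1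
    have hb := (hrα α₁ hα₁0 hα₁γ (f α₀ x) (hyw x hx)).2.1
    have hkA := keyA K w α₀ α₁ x (r α₀ x) (r α₁ (f α₀ x)) (f α₀ x)
      hK hw hw10 hKw hα₀0 hα₀w hα₁0 hα₁w hx hy ha hb
    have e : f α₁ (f α₀ x) = -(1+α₁)*(f α₀ x) + (f α₀ x)^3 + r α₁ (f α₀ x) := hf α₁ (f α₀ x)
    rw [e, hsdef, hMdef]
    exact hkA
  have keyD : ∀ x : ℝ, |x| ≤ 2*w →
      |(-(1+α₁) + 3*(f α₀ x)^2 + r' α₁ (f α₀ x)) * (-(1+α₀) + 3*x^2 + r' α₀ x)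
        - 1 - (s - 6*x^2)| ≤ w^2*s + 3*x^2 := by
    intro x hx
    have hy : f α₀ x = -(1+α₀)*x + (x^3 + r α₀ x) := by rw [hf]; ring
    have ha := (hrα α₀ hα₀0 hα₀γ x (hx24 x hx)).2.1
    have ha' := (hrα α₀ hα₀0 hα₀γ x (hx24 x hx)).2.2
    have hb' := (hrα α₁ hα₁0 hα₁γ (f α₀ x) (hyw x hx)).2.2
    have hkB := keyB K w α₀ α₁ x (r α₀ x) (r' α₀ x) (r' α₁ (f α₀ x)) (f α₀ x)
      hK hw hw10 hKw hα₀0 hα₀w hα₁0 hα₁w hx hy ha ha' hb'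
    rw [hsdef]
    exact hkB
  have rootd : ∀ x : ℝ, |x| ≤ 2*w → f α₁ (f α₀ x) = x → x ≠ 0 →
      |s - 2*x^2| ≤ s^2 + 8*s*x^2 + (M*|x|)*x^2 := by
    intro x hx hroot hx0
    apply divX M s x hx0 hMpos.le
    have hk := key x hx
    rw [hroot] at hk
    have e : x - x - (s*x - 2*x^3) = -(s*x - 2*x^3) := by ring
    rw [e, abs_neg] at hk
    exact hk
  have hwin : ∀ x : ℝ, |x| ≤ 2*w → f α₁ (f α₀ x) = x → x ≠ 0 →
      37/100*s ≤ x^2 ∧ x^2 ≤ 63/100*s := fun x hx h1 h2 =>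
    winlem M w s x hMpos hMw hw hw10 hs0 hs2w hx (rootd x hx h1 h2)
  have uniq : ∀ x₁ x₂ : ℝ, x₁ < x₂ → -(2*w) ≤ x₁ → x₂ ≤ 2*w → (0 < x₁ ∨ x₂ < 0) → 0 < s →
      f α₁ (f α₀ x₁) = x₁ → f α₁ (f α₀ x₂) = x₂ → False := by
    intro x₁ x₂ hlt hl hr' hsign hspos hr1 hr2
    have hx₁ : |x₁| ≤ 2*w := by rw [abs_le]; constructor <;> linarith
    have hx₂ : |x₂| ≤ 2*w := by rw [abs_le]; constructor <;> linarith
    have hcont : ContinuousOn (fun z => f α₁ (f α₀ z) - z) (Set.Icc x₁ x₂) :=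
      (hgc.mono (Set.Icc_subset_Icc hl hr')).sub continuousOn_id
    have hends : (fun z => f α₁ (f α₀ z) - z) x₁ = (fun z => f α₁ (f α₀ z) - z) x₂ := by
      simp only
      rw [hr1, hr2]
      ring
    obtain ⟨c, hc, hcd⟩ := exists_deriv_eq_zero hlt hcont hends
    rw [Set.mem_Ioo] at hc
    have hcI : |c| ≤ 2*w := by rw [abs_le]; constructor <;> [linarith [hc.1]; linarith [hc.2]]
    have hder : HasDerivAt (fun z => f α₁ (f α₀ z) - z)
        ((-(1+α₁) + 3*(f α₀ c)^2 + r' α₁ (f α₀ c)) * (-(1+α₀) + 3*c^2 + r' α₀ c) - 1) c :=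
      (hgd c hcI).sub (hasDerivAt_id c)
    rw [hder.deriv] at hcd
    have hkd := keyD c hcI
    have e : (-(1+α₁) + 3*(f α₀ c)^2 + r' α₁ (f α₀ c)) * (-(1+α₀) + 3*c^2 + r' α₀ c)
        - 1 - (s - 6*c^2) = -(s - 6*c^2) := by rw [hcd]; ring
    rw [e, abs_neg] at hkd
    have hcrit := critlem w s c hw hw10 hs0 hkd
    rcases hsign with hp | hn
    · have hwin1 := (hwin x₁ hx₁ hr1 (ne_of_gt hp)).1
      have : x₁^2 < c^2 := by
        rw [pow_two, pow_two]
        exact mul_self_lt_mul_self hp.le hc.1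
      linarith
    · have hwin1 := (hwin x₂ hx₂ hr2 (ne_of_lt hn)).1
      have : x₂^2 < c^2 := by
        have h9 := mul_self_lt_mul_self (show (0:ℝ) ≤ -x₂ by linarith) (show -x₂ < -c by linarith)
        calc x₂^2 = (-x₂)*(-x₂) := by ring
          _ < (-c)*(-c) := h9
          _ = c^2 := by ring
      linarith
  refine ⟨hmono, ?_, ?_⟩
  · -- s = 0 case
    intro hs x hxmem
    have hx := (hI x).mp hxmem
    constructor
    · intro hroot
      by_contra hx0
      have hd := rootd x hx hroot hx0
      rw [hs] at hd
      exact zerolem M w x hMpos hMw hw hx hx0 hd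
    · rintro rfl
      exact hg0
  · -- 0 < s case
    intro hspos
    obtain ⟨σ, hσdef⟩ : ∃ t : ℝ, t = Real.sqrt s := ⟨_, rfl⟩
    obtain ⟨v, hvdef⟩ : ∃ t : ℝ, t = Real.sqrt (s/2) := ⟨_, rfl⟩
    rw [← hvdef]
    have hσ0 : 0 ≤ σ := hσdef ▸ Real.sqrt_nonneg s
    have hσ2 : σ^2 = s := hσdef ▸ Real.sq_sqrt hspos.le
    have hσpos : 0 < σ := by
      rcases lt_or_eq_of_le hσ0 with h | h
      · exact h
      · exfalso; rw [← h] at hσ2; simp at hσ2; linarith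
    have hv0 : 0 ≤ v := hvdef ▸ Real.sqrt_nonneg (s/2)
    have hv2 : v^2 = s/2 := hvdef ▸ Real.sq_sqrt (by linarith)
    have hσ32 : σ ≤ (3/2)*w := by
      have h1 : σ*w ≤ ((3/2)*w)*w := by
        have h2 := sq_nonneg (σ - (3/2)*w)
        have h3 : σ^2 ≤ 2*w^2 := by rw [hσ2]; linarith [hw2]
        linarith [h2, h3]
      exact (mul_le_mul_iff_of_pos_right hw).mp h1
    have hbpos : 0 < σ/2 := by linarith
    have hb2w : σ/2 ≤ 2*w := by linarith
    have habs_b : |σ/2| ≤ 2*w := by rw [abs_of_pos hbpos]; linarith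
    have hb_sq : (σ/2)^2 = s/4 := by rw [div_pow, hσ2]; norm_num
    have hbw : σ/2 ≤ w := by linarith
    -- signs at the four test points
    have hφb : 0 < f α₁ (f α₀ (σ/2)) - σ/2 := by
      have hk := key (σ/2) habs_b
      rw [abs_of_pos hbpos] at hk
      exact signP M w s (σ/2) _ hM56 hMw hw hw10 hspos hbpos hb_sq hbw hk
    have hφt : f α₁ (f α₀ (2*w)) - 2*w < 0 := by
      have habs : |2*w| ≤ 2*w := by rw [abs_of_pos (by positivity)]
      have hk := key (2*w) habs
      rw [abs_of_pos (by positivity : (0:ℝ) < 2*w)] at hk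
      exact signR M w s _ hM56 hMw hw hw10 hs0 hs2w hk
    have hφmb : f α₁ (f α₀ (-(σ/2))) - (-(σ/2)) < 0 := by
      have habs : |(-(σ/2))| ≤ 2*w := by rw [abs_neg, abs_of_pos hbpos]; linarith
      have hk := key (-(σ/2)) habs
      rw [abs_neg, abs_of_pos hbpos,
        show ((-(σ/2)):ℝ)^4 = (σ/2)^4 from by ring] at hk
      have e1 : (-(f α₁ (f α₀ (-(σ/2))) - (-(σ/2)))) - (s*(σ/2) - 2*(σ/2)^3)
          = -((f α₁ (f α₀ (-(σ/2))) - (-(σ/2))) - (s*(-(σ/2)) - 2*(-(σ/2))^3)) := by ring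
      have hk' : |(-(f α₁ (f α₀ (-(σ/2))) - (-(σ/2)))) - (s*(σ/2) - 2*(σ/2)^3)|
          ≤ s^2*(σ/2) + 8*s*(σ/2)^3 + M*(σ/2)^4 := by
        rw [e1, abs_neg]
        exact hk
      have := signP M w s (σ/2) (-(f α₁ (f α₀ (-(σ/2))) - (-(σ/2))))
        hM56 hMw hw hw10 hspos hbpos hb_sq hbw hk'
      linarith
    have hφmt : 0 < f α₁ (f α₀ (-(2*w))) - (-(2*w)) := by
      have habs : |(-(2*w))| ≤ 2*w := by
        rw [abs_neg, abs_of_pos (by positivity : (0:ℝ) < 2*w)]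
      have hk := key (-(2*w)) habs
      rw [abs_neg, abs_of_pos (by positivity : (0:ℝ) < 2*w),
        show ((-(2*w)):ℝ)^4 = (2*w)^4 from by ring] at hk
      have e1 : (-(f α₁ (f α₀ (-(2*w))) - (-(2*w)))) - (s*(2*w) - 2*(2*w)^3)
          = -((f α₁ (f α₀ (-(2*w))) - (-(2*w))) - (s*(-(2*w)) - 2*(-(2*w))^3)) := by ring
      have hk' : |(-(f α₁ (f α₀ (-(2*w))) - (-(2*w)))) - (s*(2*w) - 2*(2*w)^3)|
          ≤ s^2*(2*w) + 8*s*(2*w)^3 + M*(2*w)^4 := by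
        rw [e1, abs_neg]
        exact hk
      have := signR M w s (-(f α₁ (f α₀ (-(2*w))) - (-(2*w)))) hM56 hMw hw hw10 hs0 hs2w hk'
      linarith
    -- IVT for the two nonzero fixed points
    obtain ⟨ξp, hξpmem, hξpval⟩ : ∃ ξ ∈ Set.Icc (σ/2) (2*w),
        (fun z => f α₁ (f α₀ z) - z) ξ = 0 := by
      have h := intermediate_value_Icc' hb2w
        ((hgc.mono (Set.Icc_subset_Icc (by linarith) le_rfl)).sub continuousOn_id)
      have h0 : (0:ℝ) ∈ Set.Icc ((fun z => f α₁ (f α₀ z) - z) (2*w))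
          ((fun z => f α₁ (f α₀ z) - z) (σ/2)) := by
        rw [Set.mem_Icc]
        constructor
        · simpa using le_of_lt hφt
        · simpa using le_of_lt hφb
      obtain ⟨ξ, hmem, hval⟩ := h h0
      exact ⟨ξ, hmem, hval⟩
    obtain ⟨ξm, hξmmem, hξmval⟩ : ∃ ξ ∈ Set.Icc (-(2*w)) (-(σ/2)),
        (fun z => f α₁ (f α₀ z) - z) ξ = 0 := by
      have h := intermediate_value_Icc' (by linarith : -(2*w) ≤ -(σ/2))
        ((hgc.mono (Set.Icc_subset_Icc le_rfl (by linarith))).sub continuousOn_id)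
      have h0 : (0:ℝ) ∈ Set.Icc ((fun z => f α₁ (f α₀ z) - z) (-(σ/2)))
          ((fun z => f α₁ (f α₀ z) - z) (-(2*w))) := by
        rw [Set.mem_Icc]
        constructor
        · simpa using le_of_lt hφmb
        · simpa using le_of_lt hφmt
      obtain ⟨ξ, hmem, hval⟩ := h h0
      exact ⟨ξ, hmem, hval⟩
    rw [Set.mem_Icc] at hξpmem hξmmem
    have hξp0 : 0 < ξp := lt_of_lt_of_le hbpos hξpmem.1
    have hξm0 : ξm < 0 := lt_of_le_of_lt hξmmem.2 (by linarith)
    have hξproot : f α₁ (f α₀ ξp) = ξp := by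
      have h := hξpval
      simp only at h
      linarith
    have hξmroot : f α₁ (f α₀ ξm) = ξm := by
      have h := hξmval
      simp only at h
      linarith
    have hξpI : |ξp| ≤ 2*w := by
      rw [abs_le]; exact ⟨by linarith [hξpmem.1], hξpmem.2⟩
    have hξmI : |ξm| ≤ 2*w := by
      rw [abs_le]; exact ⟨hξmmem.1, by linarith [hξmmem.2]⟩
    -- location estimates
    have hwp := hwin ξp hξpI hξproot (ne_of_gt hξp0)
    have hdp := rootd ξp hξpI hξproot (ne_of_gt hξp0)
    rw [abs_of_pos hξp0] at hdp
    have hlocp : |ξp - v| ≤ M*s :=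
      loclem M w s σ v ξp hM56 hMw hw hw10 hspos hs2w hσ0 hσ2 hv0 hv2 hξp0 hwp.1 hwp.2 hdp
    have hwm := hwin ξm hξmI hξmroot (ne_of_lt hξm0)
    have hdm := rootd ξm hξmI hξmroot (ne_of_lt hξm0)
    rw [abs_of_neg hξm0] at hdm
    have hdm' : |s - 2*(-ξm)^2| ≤ s^2 + 8*s*(-ξm)^2 + (M*(-ξm))*(-ξm)^2 := by
      rw [show ((-ξm):ℝ)^2 = ξm^2 from by ring]
      exact hdm
    have hlocm : |(-ξm) - v| ≤ M*s :=
      loclem M w s σ v (-ξm) hM56 hMw hw hw10 hspos hs2w hσ0 hσ2 hv0 hv2 (by linarith)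
        (by rw [show ((-ξm):ℝ)^2 = ξm^2 from by ring]; exact hwm.1)
        (by rw [show ((-ξm):ℝ)^2 = ξm^2 from by ring]; exact hwm.2) hdm'
    have hMsLs : M*s ≤ L*s := mul_le_mul_of_nonneg_right hML hs0
    refine ⟨ξm, ξp, hξm0, hξp0, ?_, ?_, ?_, ?_, ?_⟩
    · rw [Set.mem_Icc]; exact ⟨hξmmem.1, by linarith [hξmmem.2]⟩
    · rw [Set.mem_Icc]; exact ⟨by linarith [hξpmem.1], hξpmem.2⟩
    · linarith [hlocp]
    · rw [show ξm + v = -((-ξm) - v) from by ring, abs_neg]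
      linarith [hlocm]
    · intro x hxmem
      have hx := (hI x).mp hxmem
      have hxc := abs_le.mp hx
      constructor
      · intro hroot
        rcases lt_trichotomy x 0 with hneg | hzero | hpos
        · right; left
          by_contra hne
          rcases lt_trichotomy x ξm with h | h | h
          · exact absurd (uniq x ξm h (by linarith [hxc.1]) (by linarith) (Or.inr hξm0)
              hspos hroot hξmroot) (by simp)
          · exact hne h
          · exact absurd (uniq ξm x h hξmmem.1 (by linarith [hxc.2]) (Or.inr hneg)
              hspos hξmroot hroot) (by simp)
        · left; exact hzero
        · right; right
          by_contra hne
          rcases lt_trichotomy x ξp with h | h | h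
          · exact absurd (uniq x ξp h (by linarith [hxc.1]) hξpmem.2 (Or.inl hpos)
              hspos hroot hξproot) (by simp)
          · exact hne h
          · exact absurd (uniq ξp x h (by linarith [hξpmem.1]) (by linarith [hxc.2])
              (Or.inl hξp0) hspos hξproot hroot) (by simp)
      · rintro (rfl | rfl | rfl)
        · exact hg0
        · exact hξmroot
        · exact hξproot
end

section
/- Let K > 0 and δ > 0, and for each t ∈ ℕ let R_t : [−δ, δ] → ℝ be a C¹ function with |R_t(x)| ≤ Kx⁴ and |R_t′(x)| ≤ K|x|³ for all |x| ≤ δ. Let (λ_t)_{t∈ℕ} be a non-increasing sequence of real numbers and η > 0. Then there exists ᾱ > 0 such that whenever 0 < ηλ₀ − 2 ≤ ᾱ, there exists θ̄ > 0 such that for every initial value θ₀ with 0 < |θ₀| ≤ θ̄, the iterates defined by θ_{t+1} := (1 − ηλ_t)θ_t + θ_t³ + R_t(θ_t) satisfy |θ₀|/√(1 + 6θ₀²t) ≤ |θ_t| ≤ 2√(ηλ₀ − 2) for every t ∈ ℕ with ηλ_t ≥ 2. -/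
lemma sq_le_to_le {a b : ℝ} (hb : 0 ≤ b) (h : a^2 ≤ b^2) (ha : 0 ≤ a) : a ≤ b := by
  nlinarith [sq_nonneg (a - b)]

lemma aux_lower (c u : ℝ) (hc : 0 < c) (hc2 : c ≤ 1/5) (hu : 1 ≤ u) :
    c / Real.sqrt (u + 6*c^2) ≤ c/Real.sqrt u - (3/2) * (c/Real.sqrt u)^3 := by
  have hu0 : 0 < u := by linarith
  have hcc : c^2 ≤ 1/25 := by nlinarith
  have hv0 : 0 < u + 6*c^2 := by nlinarith
  set su := Real.sqrt u with hsu
  set sv := Real.sqrt (u + 6*c^2) with hsv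
  have hsu0 : 0 < su := Real.sqrt_pos.2 hu0
  have hsv0 : 0 < sv := Real.sqrt_pos.2 hv0
  have hsu2 : su^2 = u := Real.sq_sqrt hu0.le
  have hsv2 : sv^2 = u + 6*c^2 := Real.sq_sqrt hv0.le
  have hw : 0 < u - (3/2)*c^2 := by nlinarith
  have key : su^3 ≤ sv * (u - (3/2)*c^2) := by
    apply sq_le_to_le (by positivity) _ (by positivity)
    have h3 : (su^3)^2 = u^3 := by
      rw [show (su^3)^2 = (su^2)^3 by ring, hsu2]
    rw [h3, mul_pow, hsv2]
    nlinarith [mul_nonneg (mul_nonneg (sq_nonneg c) hu0.le)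
      (by nlinarith : (0:ℝ) ≤ 3*u - (63/4)*c^2), pow_pos hc 6]
  have h1 : c/su - (3/2)*(c/su)^3 = c*(u - (3/2)*c^2)/su^3 := by
    rw [← hsu2]; field_simp
  rw [h1, div_le_div_iff₀ hsv0 (by positivity)]
  nlinarith [mul_le_mul_of_nonneg_left key hc.le]

set_option maxHeartbeats 1000000 in
/-- The inductive step, stated with plain real variables. -/
lemma step_bounds (K s a c u y z : ℝ) (hK : 0 < K) (hs0 : 0 < s) (hs1 : s ≤ 1/10)
    (hKs : K * s ≤ 1/4) (hc : 0 < c) (hc5 : c ≤ 1/5) (hu : 1 ≤ u)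
    (ha1 : 1 ≤ a) (ha2 : a ≤ 1 + s^2)
    (hL : c / Real.sqrt u ≤ |y|) (hU : |y| ≤ 2*s)
    (hz : |y*(y^2 - a)| - K*|y|^4 ≤ |z| ∧ |z| ≤ |y*(y^2 - a)| + K*|y|^4) :
    c / Real.sqrt (u + 6*c^2) ≤ |z| ∧ |z| ≤ 2*s := by
  obtain ⟨hz1, hz2⟩ := hz
  obtain ⟨m, hm⟩ : ∃ m, m = |y| := ⟨_, rfl⟩
  have hm0 : 0 ≤ m := hm ▸ abs_nonneg y
  have hm2s : m ≤ 2*s := hm ▸ hU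
  have hm5 : m ≤ 1/5 := by linarith
  have hym : y^2 = m^2 := by rw [hm, sq_abs]
  have habs : |y*(y^2 - a)| = m * (a - m^2) := by
    rw [abs_mul, ← hm, abs_of_nonpos (by nlinarith), hym]; ring
  have hKm : K * m ≤ 1/2 := by nlinarith
  have hKm4 : K * m^4 ≤ m^3/2 := by nlinarith [pow_nonneg hm0 3]
  rw [habs, ← hm] at hz1 hz2
  constructor
  · -- lower bound
    have hlow2 : m - (3/2)*m^3 ≤ |z| := by
      nlinarith [mul_le_mul_of_nonneg_left ha1 hm0]
    have hA := aux_lower c u hc hc5 hu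
    obtain ⟨L, hLdef⟩ : ∃ L, L = c / Real.sqrt u := ⟨_, rfl⟩
    rw [← hLdef] at hA hL
    rw [← hm] at hL
    have hL0 : 0 ≤ L := hLdef ▸ by positivity
    have hfac : (0:ℝ) ≤ 1 - (3/2)*(m^2 + m*L + L^2) := by
      nlinarith [mul_le_mul_of_nonneg_left hL hL0, mul_le_mul_of_nonneg_right hL hm0]
    have hmono : L - (3/2)*L^3 ≤ m - (3/2)*m^3 := by
      nlinarith [mul_nonneg (sub_nonneg.2 hL) hfac]
    linarith
  · -- upper bound
    have hfac2 : (0:ℝ) ≤ 1 + s^2 - (m^2 + 2*s*m + 4*s^2)/2 := by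
      nlinarith [mul_le_mul hm2s hm2s hm0 (by positivity : (0:ℝ) ≤ 2*s),
        mul_le_mul_of_nonneg_left hm2s hs0.le]
    have : m * (a - m^2) + K * m^4 ≤ 2*s := by
      nlinarith [mul_nonneg (sub_nonneg.2 hm2s) hfac2, pow_nonneg hs0.le 3,
        mul_le_mul_of_nonneg_left ha2 hm0]
    linarith

set_option maxHeartbeats 1000000 in
/-- Upper and lower bounds for the orthogonal iterates, subcritical phase.
For the recursion `θ_{t+1} = (1-ηλ_t)θ_t + θ_t³ + R_t(θ_t)` with non-increasing sharpness
sequence `(λ_t)`, if `0 < ηλ₀ - 2` is sufficiently small then for all sufficiently small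
nonzero `θ₀`, one has `|θ₀|/√(1+6θ₀²t) ≤ |θ_t| ≤ 2√(ηλ₀-2)` for every `t` with `ηλ_t ≥ 2`. -/
theorem stmt_6
    (K δ : ℝ) (hK : 0 < K) (hδ : 0 < δ)
    (R R' : ℕ → ℝ → ℝ)
    (hR : ∀ t : ℕ, ∀ x : ℝ, |x| ≤ δ →
      HasDerivAt (R t) (R' t x) x ∧ |R t x| ≤ K * x ^ 4 ∧ |R' t x| ≤ K * |x| ^ 3)
    (lam : ℕ → ℝ) (hlam : Antitone lam) (η : ℝ) (hη : 0 < η) :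
    ∃ ᾱ : ℝ, 0 < ᾱ ∧
      (0 < η * lam 0 - 2 → η * lam 0 - 2 ≤ ᾱ →
        ∃ θb : ℝ, 0 < θb ∧
          ∀ θ : ℕ → ℝ, 0 < |θ 0| → |θ 0| ≤ θb →
            (∀ t : ℕ, θ (t + 1) = (1 - η * lam t) * θ t + (θ t) ^ 3 + R t (θ t)) →
            ∀ t : ℕ, 2 ≤ η * lam t →
              |θ 0| / Real.sqrt (1 + 6 * (θ 0) ^ 2 * t) ≤ |θ t| ∧
              |θ t| ≤ 2 * Real.sqrt (η * lam 0 - 2)) := by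
  refine ⟨min (min (1/100) (1/(16*K^2))) (δ^2/4), by positivity, ?_⟩
  intro hα0 hαle
  obtain ⟨α, hαdef⟩ : ∃ α, α = η * lam 0 - 2 := ⟨_, rfl⟩
  rw [← hαdef] at hα0 hαle
  have hα1 : α ≤ 1/100 := le_trans hαle (le_trans (min_le_left _ _) (min_le_left _ _))
  have hα2 : α ≤ 1/(16*K^2) := le_trans hαle (le_trans (min_le_left _ _) (min_le_right _ _))
  have hα3 : α ≤ δ^2/4 := le_trans hαle (min_le_right _ _)
  obtain ⟨s, hsdef⟩ : ∃ s, s = Real.sqrt α := ⟨_, rfl⟩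
  have hs0 : 0 < s := hsdef ▸ Real.sqrt_pos.2 hα0
  have hs2 : s^2 = α := hsdef ▸ Real.sq_sqrt hα0.le
  have hs1 : s ≤ 1/10 := by
    have h := Real.sqrt_le_sqrt hα1
    rw [show (1/100:ℝ) = (1/10)^2 by norm_num, Real.sqrt_sq (by norm_num)] at h
    exact hsdef ▸ h
  have hKs : K * s ≤ 1/4 := by
    have h := Real.sqrt_le_sqrt hα2
    rw [show (1/(16*K^2):ℝ) = (1/(4*K))^2 by field_simp; ring,
      Real.sqrt_sq (by positivity)] at h
    rw [hsdef]
    calc K * Real.sqrt α ≤ K * (1/(4*K)) := by nlinarith [Real.sqrt_nonneg α]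
      _ = 1/4 := by field_simp
  have hsδ : 2*s ≤ δ := by
    have h := Real.sqrt_le_sqrt hα3
    rw [show (δ^2/4:ℝ) = (δ/2)^2 by ring, Real.sqrt_sq (by positivity)] at h
    rw [hsdef]; linarith
  refine ⟨2*s, by positivity, ?_⟩
  intro θ hθ0 hθb hrec
  have hc5 : |θ 0| ≤ 1/5 := by linarith
  have main : ∀ t : ℕ, 2 ≤ η * lam t →
      |θ 0| / Real.sqrt (1 + 6 * (θ 0)^2 * t) ≤ |θ t| ∧ |θ t| ≤ 2*s := by
    intro t
    induction t with
    | zero =>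
      intro _
      constructor
      · simp
      · exact hθb
    | succ t IH =>
      intro h2
      have hlt : lam (t+1) ≤ lam t := hlam (Nat.le_succ t)
      have h2t : 2 ≤ η * lam t := le_trans h2 (by nlinarith)
      obtain ⟨hL, hU⟩ := IH h2t
      have hub : η * lam t ≤ 2 + α := by
        have h0 := hlam (Nat.zero_le t)
        nlinarith
      have hxδ : |θ t| ≤ δ := le_trans hU hsδ
      obtain ⟨-, hRb, -⟩ := hR t (θ t) hxδ
      have hRb' : |R t (θ t)| ≤ K * |θ t|^4 := by
        rwa [show (θ t)^4 = |θ t|^4 by rw [← abs_pow, abs_of_nonneg (by positivity)]] at hRb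
      have heq : θ (t+1) = (θ t)*((θ t)^2 - (η * lam t - 1)) + R t (θ t) := by
        rw [hrec t]; ring
      have hz : |(θ t)*((θ t)^2 - (η * lam t - 1))| - K*|θ t|^4 ≤ |θ (t+1)| ∧
          |θ (t+1)| ≤ |(θ t)*((θ t)^2 - (η * lam t - 1))| + K*|θ t|^4 := by
        constructor
        · rw [heq]
          have h1 : |(θ t)*((θ t)^2 - (η * lam t - 1))| ≤
              |(θ t)*((θ t)^2 - (η * lam t - 1)) + R t (θ t)| + |R t (θ t)| := by
            calc |(θ t)*((θ t)^2 - (η * lam t - 1))|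
                = |((θ t)*((θ t)^2 - (η * lam t - 1)) + R t (θ t)) + (-(R t (θ t)))| := by
                  congr 1; ring
              _ ≤ _ + |(-(R t (θ t)))| := abs_add_le _ _
              _ = _ + |R t (θ t)| := by rw [abs_neg]
          linarith
        · rw [heq]
          calc |(θ t)*((θ t)^2 - (η * lam t - 1)) + R t (θ t)|
              ≤ |(θ t)*((θ t)^2 - (η * lam t - 1))| + |R t (θ t)| := abs_add_le _ _
            _ ≤ _ := by linarith
      have hu1 : (1:ℝ) ≤ 1 + 6 * (θ 0)^2 * t := by
        have h6 : (0:ℝ) ≤ 6 * (θ 0)^2 * t := by positivity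
        linarith
      have hstep := step_bounds K s (η * lam t - 1) (|θ 0|) (1 + 6 * (θ 0)^2 * t)
        (θ t) (θ (t+1)) hK hs0 hs1 hKs hθ0 hc5 hu1
        (by linarith) (by rw [hs2]; rw [hαdef]; linarith) hL hU hz
      have hrw : (1:ℝ) + 6 * (θ 0)^2 * ((t:ℕ)+1:ℕ) =
          (1 + 6 * (θ 0)^2 * t) + 6*|θ 0|^2 := by
        rw [sq_abs]; push_cast; ring
      rw [hrw]
      exact hstep
  intro t h2
  have h := main t h2
  rw [show 2 * Real.sqrt (η * lam 0 - 2) = 2*s by rw [hsdef, hαdef]]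
  exact h
end

section
/- Let p ≥ 2, let f : ℝ^p → ℝ be continuous on ℝ^p and infinitely differentiable on a neighbourhood of M := f⁻¹{y}, where y ∈ ℝ is such that M is nonempty and ∇f(θ) ≠ 0 for every θ ∈ M; let n := ∇f/‖∇f‖ and ℓ(θ) := (1/2)(f(θ) − y)². Suppose θ* ∈ M is such that for every sufficiently small s ∈ ℝ, the gradient ∇ℓ(θ* + s·n(θ*)) is a scalar multiple of n(θ*). Then there exist a relatively open neighbourhood V of θ* in M and constants ε > 0 and C > 0 such that for all θ ∈ V and all s ∈ ℝ with |s| < ε, ‖P_θ ∇ℓ(θ + s·n(θ))‖ ≤ C‖θ − θ*‖, where P_θ denotes the orthogonal projection of ℝ^p onto the tangent space ker Df(θ). -/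
/-- The unit normal field `n = ∇f/‖∇f‖` of a level hypersurface of `f`. -/
noncomputable def unitNormal {p : ℕ} (f : EuclideanSpace ℝ (Fin p) → ℝ)
    (θ : EuclideanSpace ℝ (Fin p)) : EuclideanSpace ℝ (Fin p) :=
  ‖gradient f θ‖⁻¹ • gradient f θ

open Metric

lemma gradAux {p : ℕ} {f : EuclideanSpace ℝ (Fin p) → ℝ} {x : EuclideanSpace ℝ (Fin p)}
    (hf : ContDiffAt ℝ (⊤ : ℕ∞) f x) : ContDiffAt ℝ (⊤ : ℕ∞) (gradient f) x := by
  have h1 : ContDiffAt ℝ (⊤ : ℕ∞) (fderiv ℝ f) x :=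
    hf.fderiv_right (by exact_mod_cast le_top)
  exact ((InnerProductSpace.toDual ℝ (EuclideanSpace ℝ (Fin p))).symm.contDiff
    (n := (⊤ : ℕ∞))).contDiffAt.comp x h1

/-- Scaling of the tangential gradient under orthogonal stability.
If the normal line at `θ* ∈ M` is invariant (the gradient of `ℓ = (1/2)(f-y)²` along it
is normal), then near `θ*` the tangential component `P_θ ∇ℓ(θ + s·n(θ))` is
`O(‖θ - θ*‖)` uniformly in small `s`. -/
theorem stmt_10
    (p : ℕ) (hp : 2 ≤ p)
    (f : EuclideanSpace ℝ (Fin p) → ℝ) (y : ℝ)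
    (hf : Continuous f)
    (hsmooth : ∃ V : Set (EuclideanSpace ℝ (Fin p)),
      IsOpen V ∧ f ⁻¹' {y} ⊆ V ∧ ContDiffOn ℝ (⊤ : ℕ∞) f V)
    (hM : (f ⁻¹' {y}).Nonempty)
    (hreg : ∀ θ ∈ f ⁻¹' {y}, gradient f θ ≠ 0)
    (ℓ : EuclideanSpace ℝ (Fin p) → ℝ)
    (hℓ : ∀ θ, ℓ θ = (1 / 2) * (f θ - y) ^ 2)
    (θs : EuclideanSpace ℝ (Fin p)) (hθs : θs ∈ f ⁻¹' {y})
    (horth : ∃ s₀ : ℝ, 0 < s₀ ∧ ∀ s : ℝ, |s| < s₀ →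
      ∃ k : ℝ, gradient ℓ (θs + s • unitNormal f θs) = k • unitNormal f θs) :
    ∃ V : Set (EuclideanSpace ℝ (Fin p)),
      (∃ W : Set (EuclideanSpace ℝ (Fin p)), IsOpen W ∧ V = W ∩ (f ⁻¹' {y})) ∧
      θs ∈ V ∧
      ∃ ε C : ℝ, 0 < ε ∧ 0 < C ∧
        ∀ θ ∈ V, ∀ s : ℝ, |s| < ε →
          ‖gradient ℓ (θ + s • unitNormal f θ) -
              (inner ℝ (unitNormal f θ) (gradient ℓ (θ + s • unitNormal f θ)) : ℝ) •
                unitNormal f θ‖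
            ≤ C * ‖θ - θs‖ := by
  classical
  obtain ⟨U, hUo, hMU, hfU⟩ := hsmooth
  have hθsU : θs ∈ U := hMU hθs
  have hfat : ContDiffAt ℝ (⊤ : ℕ∞) f θs := hfU.contDiffAt (hUo.mem_nhds hθsU)
  have hgrad : ContDiffAt ℝ (⊤ : ℕ∞) (gradient f) θs := gradAux hfat
  have hgns : gradient f θs ≠ 0 := hreg θs hθs
  have hn : ContDiffAt ℝ (⊤ : ℕ∞) (unitNormal f) θs := by
    have hnorm : ContDiffAt ℝ (⊤ : ℕ∞) (fun θ => ‖gradient f θ‖) θs := hgrad.norm ℝ hgns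
    exact (hnorm.inv (norm_ne_zero_iff.2 hgns)).smul hgrad
  have hℓfun : ℓ = fun θ => (1 / 2) * (f θ - y) ^ 2 := funext hℓ
  have hℓat : ContDiffAt ℝ (⊤ : ℕ∞) ℓ θs := by
    rw [hℓfun]
    exact contDiffAt_const.mul ((hfat.sub contDiffAt_const).pow 2)
  have hgℓ : ContDiffAt ℝ (⊤ : ℕ∞) (gradient ℓ) θs := gradAux hℓat
  -- the joint map
  set n : EuclideanSpace ℝ (Fin p) → EuclideanSpace ℝ (Fin p) := unitNormal f with hn_def
  set F : (EuclideanSpace ℝ (Fin p)) × ℝ → EuclideanSpace ℝ (Fin p) :=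
    fun q => gradient ℓ (q.1 + q.2 • n q.1) -
      (inner ℝ (n q.1) (gradient ℓ (q.1 + q.2 • n q.1)) : ℝ) • n q.1 with hF_def
  have hφ : ContDiffAt ℝ (⊤ : ℕ∞)
      (fun q : (EuclideanSpace ℝ (Fin p)) × ℝ => q.1 + q.2 • n q.1) (θs, 0) := by
    exact contDiffAt_fst.add (contDiffAt_snd.smul (ContDiffAt.comp (g := n) (f := Prod.fst) (θs, (0:ℝ)) hn contDiffAt_fst))
  have him : θs + (0:ℝ) • n θs = θs := by simp
  have hgℓ' : ContDiffAt ℝ (⊤ : ℕ∞) (gradient ℓ)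
      ((fun q : (EuclideanSpace ℝ (Fin p)) × ℝ => q.1 + q.2 • n q.1) (θs, 0)) := by
    simpa [him] using hgℓ
  have hA : ContDiffAt ℝ (⊤ : ℕ∞)
      (fun q : (EuclideanSpace ℝ (Fin p)) × ℝ => gradient ℓ (q.1 + q.2 • n q.1)) (θs, 0) :=
    ContDiffAt.comp (g := gradient ℓ) (f := fun q : (EuclideanSpace ℝ (Fin p)) × ℝ => q.1 + q.2 • n q.1) (θs, (0:ℝ)) hgℓ' hφ
  have hN : ContDiffAt ℝ (⊤ : ℕ∞)
      (fun q : (EuclideanSpace ℝ (Fin p)) × ℝ => n q.1) (θs, 0) :=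
    ContDiffAt.comp (g := n) (f := Prod.fst) (θs, (0:ℝ)) hn contDiffAt_fst
  have hF : ContDiffAt ℝ 1 F (θs, 0) :=
    (hA.sub ((hN.inner ℝ hA).smul hN)).of_le (by exact_mod_cast le_top)
  obtain ⟨K, t, ht, hlip⟩ := hF.exists_lipschitzOnWith
  obtain ⟨δ, hδ, hball⟩ := Metric.mem_nhds_iff.mp ht
  obtain ⟨s₀, hs₀, horth'⟩ := horth
  have hns1 : ‖n θs‖ = 1 := by
    rw [hn_def]
    unfold unitNormal
    rw [norm_smul, norm_inv, norm_norm, inv_mul_cancel₀ (norm_ne_zero_iff.2 hgns)]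
  refine ⟨ball θs δ ∩ f ⁻¹' {y}, ⟨ball θs δ, isOpen_ball, rfl⟩,
    ⟨mem_ball_self hδ, hθs⟩, min δ s₀, (K : ℝ) + 1, lt_min hδ hs₀, by positivity, ?_⟩
  intro θ hθ s hs
  have hsδ : |s| < δ := lt_of_lt_of_le hs (min_le_left _ _)
  have hss₀ : |s| < s₀ := lt_of_lt_of_le hs (min_le_right _ _)
  have hmem1 : (θ, s) ∈ t := by
    apply hball
    simp only [mem_ball, Prod.dist_eq, Real.dist_eq, sub_zero, max_lt_iff]
    exact ⟨hθ.1, hsδ⟩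
  have hmem2 : ((θs, s) : (EuclideanSpace ℝ (Fin p)) × ℝ) ∈ t := by
    apply hball
    simp only [mem_ball, Prod.dist_eq, Real.dist_eq, sub_zero, max_lt_iff]
    exact ⟨by simpa using hδ, hsδ⟩
  have hF0 : F (θs, s) = 0 := by
    obtain ⟨k, hk⟩ := horth' s hss₀
    simp only [hF_def]
    rw [hk, real_inner_smul_right, real_inner_self_eq_norm_sq, hns1]
    simp [smul_smul]
  have hlipest := hlip.dist_le_mul (θ, s) hmem1 (θs, s) hmem2
  rw [hF0, dist_zero_right] at hlipest
  have hdist : dist ((θ, s) : (EuclideanSpace ℝ (Fin p)) × ℝ) (θs, s) = ‖θ - θs‖ := by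
    rw [dist_eq_norm]
    show max ‖θ - θs‖ ‖s - s‖ = ‖θ - θs‖
    simp
  rw [hdist] at hlipest
  have : ‖F (θ, s)‖ ≤ ((K : ℝ) + 1) * ‖θ - θs‖ := by
    refine hlipest.trans ?_
    have : (0:ℝ) ≤ ‖θ - θs‖ := norm_nonneg _
    nlinarith [this]
  simpa [hF_def] using this
end

section
/- For every integer p ≥ 2 and all positive real numbers a₁, …, a_p, one has 4·(Σ_{1≤i<j≤p} aᵢaⱼ)² > (Σ_{i=1}^p aᵢ)·(Σ_{1≤i<j<k≤p} aᵢaⱼaₖ), where for p = 2 the triple sum is interpreted as 0. -/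
set_option maxHeartbeats 800000

open Finset

private lemma pair_split {p : ℕ} (a : Fin p → ℝ) (i j : Fin p) :
    a i * a j = (if i < j then a i * a j else 0) + (if j < i then a i * a j else 0)
      + (if i = j then a i * a j else 0) := by
  rcases lt_trichotomy i j with h | h | h
  · rw [if_pos h, if_neg (asymm h), if_neg h.ne]; ring
  · subst h; simp
  · rw [if_neg (asymm h), if_pos h, if_neg h.ne']; ring

private lemma e2_identity {p : ℕ} (a : Fin p → ℝ) :
    2 * (∑ i : Fin p, ∑ j : Fin p, if i < j then a i * a j else 0)
      = (∑ i : Fin p, a i) ^ 2 - ∑ i : Fin p, (a i) ^ 2 := by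
  have key : (∑ i : Fin p, a i) ^ 2
      = (∑ i : Fin p, ∑ j : Fin p, if i < j then a i * a j else 0)
        + (∑ i : Fin p, ∑ j : Fin p, if j < i then a i * a j else 0)
        + ∑ i : Fin p, (a i) ^ 2 := by
    rw [sq, Finset.sum_mul_sum]
    calc (∑ i : Fin p, ∑ j : Fin p, a i * a j)
        = ∑ i : Fin p, ∑ j : Fin p, ((if i < j then a i * a j else 0)
            + (if j < i then a i * a j else 0) + (if i = j then a i * a j else 0)) := by
          exact Finset.sum_congr rfl fun i _ => Finset.sum_congr rfl fun j _ => pair_split a i j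
      _ = (∑ i : Fin p, ∑ j : Fin p, if i < j then a i * a j else 0)
            + (∑ i : Fin p, ∑ j : Fin p, if j < i then a i * a j else 0)
            + ∑ i : Fin p, ∑ j : Fin p, (if i = j then a i * a j else 0) := by
          simp [Finset.sum_add_distrib]
      _ = _ := by
          congr 1
          simp [Finset.sum_ite_eq, sq]
  have swap : (∑ i : Fin p, ∑ j : Fin p, if j < i then a i * a j else 0)
      = (∑ i : Fin p, ∑ j : Fin p, if i < j then a i * a j else 0) := by
    rw [Finset.sum_comm]
    exact Finset.sum_congr rfl fun i _ => Finset.sum_congr rfl fun j _ => by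
      rcases lt_or_ge i j with h | h
      · rw [if_pos h, if_pos h, mul_comm]
      · rw [if_neg (not_lt.2 h), if_neg (not_lt.2 h)]
  rw [swap] at key
  linarith [key]

private lemma triple_split {p : ℕ} (a : Fin p → ℝ) (k i j : Fin p) :
    (if i < j then a k * (a i * a j) else 0)
      = (if k < i ∧ i < j then a k * a i * a j else 0)
      + (if i < k ∧ k < j then a i * a k * a j else 0)
      + (if i < j ∧ j < k then a i * a j * a k else 0)
      + (if k = i then (if i < j then a k * a i * a j else 0) else 0)
      + (if k = j then (if i < j then a i * a j * a k else 0) else 0) := by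
  simp only [Fin.lt_def, Fin.ext_iff]
  split_ifs <;> first | ring1 | (exfalso; omega)

private lemma e3_identity {p : ℕ} (a : Fin p → ℝ) :
    3 * (∑ i : Fin p, ∑ j : Fin p, ∑ k : Fin p,
        if i < j ∧ j < k then a i * a j * a k else 0)
      = (∑ i : Fin p, a i) * (∑ i : Fin p, ∑ j : Fin p, if i < j then a i * a j else 0)
        - (∑ i : Fin p, a i) * (∑ i : Fin p, (a i) ^ 2) + ∑ i : Fin p, (a i) ^ 3 := by
  have expand : (∑ i : Fin p, a i) *
      (∑ i : Fin p, ∑ j : Fin p, if i < j then a i * a j else 0)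
      = ∑ k : Fin p, ∑ i : Fin p, ∑ j : Fin p,
          (if i < j then a k * (a i * a j) else 0) := by
    rw [Finset.sum_mul]
    simp only [Finset.mul_sum, mul_ite, mul_zero]
  rw [expand]
  have split : (∑ k : Fin p, ∑ i : Fin p, ∑ j : Fin p,
      (if i < j then a k * (a i * a j) else 0))
      = (∑ k : Fin p, ∑ i : Fin p, ∑ j : Fin p,
          if k < i ∧ i < j then a k * a i * a j else 0)
      + (∑ k : Fin p, ∑ i : Fin p, ∑ j : Fin p,
          if i < k ∧ k < j then a i * a k * a j else 0)
      + (∑ k : Fin p, ∑ i : Fin p, ∑ j : Fin p,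
          if i < j ∧ j < k then a i * a j * a k else 0)
      + (∑ k : Fin p, ∑ i : Fin p, ∑ j : Fin p,
          if k = i then (if i < j then a k * a i * a j else 0) else 0)
      + (∑ k : Fin p, ∑ i : Fin p, ∑ j : Fin p,
          if k = j then (if i < j then a i * a j * a k else 0) else 0) := by
    simp only [← Finset.sum_add_distrib]
    exact Finset.sum_congr rfl fun k _ => Finset.sum_congr rfl fun i _ =>
      Finset.sum_congr rfl fun j _ => triple_split a k i j
  rw [split]
  -- the three strict pieces all equal T
  have hP2 : (∑ k : Fin p, ∑ i : Fin p, ∑ j : Fin p,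
      if i < k ∧ k < j then a i * a k * a j else 0)
      = ∑ i : Fin p, ∑ j : Fin p, ∑ k : Fin p,
          if i < j ∧ j < k then a i * a j * a k else 0 := by
    rw [Finset.sum_comm]
  have hP3 : (∑ k : Fin p, ∑ i : Fin p, ∑ j : Fin p,
      if i < j ∧ j < k then a i * a j * a k else 0)
      = ∑ i : Fin p, ∑ j : Fin p, ∑ k : Fin p,
          if i < j ∧ j < k then a i * a j * a k else 0 := by
    rw [Finset.sum_comm]
    exact Finset.sum_congr rfl fun i _ => Finset.sum_comm
  -- the two equality pieces
  have hP4 : (∑ k : Fin p, ∑ i : Fin p, ∑ j : Fin p,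
      if k = i then (if i < j then a k * a i * a j else 0) else 0)
      = ∑ i : Fin p, ∑ j : Fin p, if i < j then a i * a i * a j else 0 := by
    rw [Finset.sum_comm]
    exact Finset.sum_congr rfl fun i _ => by
      rw [Finset.sum_comm]
      exact Finset.sum_congr rfl fun j _ => by
        simp [Finset.sum_ite_eq']
  have hP5 : (∑ k : Fin p, ∑ i : Fin p, ∑ j : Fin p,
      if k = j then (if i < j then a i * a j * a k else 0) else 0)
      = ∑ i : Fin p, ∑ j : Fin p, if i < j then a i * a j * a j else 0 := by
    rw [Finset.sum_comm]
    exact Finset.sum_congr rfl fun i _ => by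
      rw [Finset.sum_comm]
      exact Finset.sum_congr rfl fun j _ => by
        simp [Finset.sum_ite_eq']
  have hQ : (∑ i : Fin p, ∑ j : Fin p, if i < j then a i * a i * a j else 0)
      + (∑ i : Fin p, ∑ j : Fin p, if i < j then a i * a j * a j else 0)
      = (∑ i : Fin p, a i) * (∑ i : Fin p, (a i) ^ 2) - ∑ i : Fin p, (a i) ^ 3 := by
    have hB : (∑ i : Fin p, ∑ j : Fin p, if i < j then a i * a j * a j else 0)
        = ∑ i : Fin p, ∑ j : Fin p, if j < i then a j * a i * a i else 0 := by
      rw [Finset.sum_comm]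
    rw [hB]
    have key : (∑ i : Fin p, ∑ j : Fin p, a i * a i * a j)
        = (∑ i : Fin p, ∑ j : Fin p, if i < j then a i * a i * a j else 0)
        + (∑ i : Fin p, ∑ j : Fin p, if j < i then a j * a i * a i else 0)
        + ∑ i : Fin p, (a i) ^ 3 := by
      calc (∑ i : Fin p, ∑ j : Fin p, a i * a i * a j)
          = ∑ i : Fin p, ∑ j : Fin p, ((if i < j then a i * a i * a j else 0)
              + (if j < i then a j * a i * a i else 0)
              + (if i = j then a i * a i * a j else 0)) := by
            exact Finset.sum_congr rfl fun i _ => Finset.sum_congr rfl fun j _ => by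
              rcases lt_trichotomy i j with h | h | h
              · rw [if_pos h, if_neg (asymm h), if_neg h.ne]; ring
              · subst h; simp
              · rw [if_neg (asymm h), if_pos h, if_neg h.ne']; ring
        _ = _ := by
            simp only [Finset.sum_add_distrib]
            congr 1
            simp only [Finset.sum_ite_eq, Finset.mem_univ, if_true]
            exact Finset.sum_congr rfl fun i _ => by ring
    have hfull : (∑ i : Fin p, ∑ j : Fin p, a i * a i * a j)
        = (∑ i : Fin p, a i) * (∑ i : Fin p, (a i) ^ 2) := by
      rw [mul_comm, Finset.sum_mul_sum]
      exact Finset.sum_congr rfl fun i _ => Finset.sum_congr rfl fun j _ => by ring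
    rw [hfull] at key
    linarith [key]
  linarith [split, hP2, hP3, hP4, hP5, hQ]

/-- Strict Newton-type inequality for elementary symmetric sums.
For positive reals `a₁, …, a_p` with `p ≥ 2`:
`4(Σ_{i<j} aᵢaⱼ)² > (Σᵢ aᵢ)(Σ_{i<j<k} aᵢaⱼaₖ)`. -/
theorem stmt_13
    (p : ℕ) (hp : 2 ≤ p) (a : Fin p → ℝ) (ha : ∀ i, 0 < a i) :
    4 * (∑ i : Fin p, ∑ j : Fin p, if i < j then a i * a j else 0) ^ 2 >
      (∑ i : Fin p, a i) *
        (∑ i : Fin p, ∑ j : Fin p, ∑ k : Fin p,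
          if i < j ∧ j < k then a i * a j * a k else 0) := by
  set S1 := ∑ i : Fin p, a i with hS1def
  set S2 := ∑ i : Fin p, (a i) ^ 2 with hS2def
  set S3 := ∑ i : Fin p, (a i) ^ 3 with hS3def
  set E2 := ∑ i : Fin p, ∑ j : Fin p, if i < j then a i * a j else 0 with hE2def
  set T := ∑ i : Fin p, ∑ j : Fin p, ∑ k : Fin p,
      if i < j ∧ j < k then a i * a j * a k else 0 with hTdef
  have hA : 2 * E2 = S1 ^ 2 - S2 := e2_identity a
  have hBident : 3 * T = S1 * E2 - S1 * S2 + S3 := e3_identity a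
  have hS1pos : 0 < S1 :=
    Finset.sum_pos (fun i _ => ha i) ⟨⟨0, by omega⟩, Finset.mem_univ _⟩
  have hS2pos : 0 < S2 :=
    Finset.sum_pos (fun i _ => pow_pos (ha i) 2) ⟨⟨0, by omega⟩, Finset.mem_univ _⟩
  have hS3pos : 0 < S3 :=
    Finset.sum_pos (fun i _ => pow_pos (ha i) 3) ⟨⟨0, by omega⟩, Finset.mem_univ _⟩
  have hE2pos : 0 < E2 := by
    refine Finset.sum_pos'
      (fun i _ => Finset.sum_nonneg fun j _ => by
        split_ifs
        · exact (mul_pos (ha i) (ha j)).le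
        · exact le_rfl)
      ⟨⟨0, by omega⟩, Finset.mem_univ _, Finset.sum_pos'
        (fun j _ => by
          split_ifs
          · exact (mul_pos (ha _) (ha j)).le
          · exact le_rfl)
        ⟨⟨1, by omega⟩, Finset.mem_univ _, by
          rw [if_pos (by simp [Fin.lt_def])]
          exact mul_pos (ha _) (ha _)⟩⟩
  have hlt : S2 < S1 ^ 2 := by linarith
  -- Cauchy–Schwarz: S3² ≤ S2³
  have hcs : (∑ i : Fin p, a i * (a i) ^ 2) ^ 2
      ≤ (∑ i : Fin p, (a i) ^ 2) * (∑ i : Fin p, ((a i) ^ 2) ^ 2) :=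
    Finset.sum_mul_sq_le_sq_mul_sq Finset.univ a (fun i => (a i) ^ 2)
  have h34 : (∑ i : Fin p, a i * (a i) ^ 2) = S3 := by
    rw [hS3def]
    exact Finset.sum_congr rfl fun i _ => by ring
  have h4 : (∑ i : Fin p, ((a i) ^ 2) ^ 2) ≤ S2 ^ 2 :=
    Finset.sum_sq_le_sq_sum_of_nonneg (fun i _ => sq_nonneg _)
  have hD : S3 ^ 2 ≤ S2 ^ 3 := by
    rw [h34] at hcs
    nlinarith [hcs, h4, hS2pos]
  -- key quantity Y := 5 S1⁴ − 9 S1² S2 + 6 S2²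
  have hYpos : 0 < 5 * S1 ^ 4 - 9 * S1 ^ 2 * S2 + 6 * S2 ^ 2 := by
    nlinarith [sq_nonneg (4 * S2 - 3 * S1 ^ 2), pow_pos hS1pos 2, sq_nonneg (S1 ^ 2)]
  have hquad : 0 < 25 * S1 ^ 4 - 40 * S1 ^ 2 * S2 + 36 * S2 ^ 2 := by
    nlinarith [sq_nonneg (5 * S1 ^ 2 - 4 * S2), sq_nonneg S2, hS2pos]
  have hYsq : (2 * S1 * S3) ^ 2 < (5 * S1 ^ 4 - 9 * S1 ^ 2 * S2 + 6 * S2 ^ 2) ^ 2 := by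
    nlinarith [mul_pos (mul_pos (sub_pos.2 hlt) (sub_pos.2 hlt)) hquad,
      mul_nonneg (sq_nonneg (2 * S1)) (sub_nonneg.2 hD)]
  have hY : 2 * S1 * S3 < 5 * S1 ^ 4 - 9 * S1 ^ 2 * S2 + 6 * S2 ^ 2 := by
    nlinarith [hYpos, hYsq, mul_pos (mul_pos hS1pos hS3pos) (by norm_num : (0:ℝ) < 2)]
  nlinarith [hY, hA, hBident, hS1pos, hE2pos]
end

section
/- Fix an integer p ≥ 2 and let θ ∈ ℝ^p have all coordinates positive. Set aᵢ := θᵢ⁻² and define c(θ) := 32·(Σ_{1≤i<j≤p} aᵢaⱼ)²·(Σᵢ aᵢ)⁻³ − 8·(Σ_{1≤i<j<k≤p} aᵢaⱼaₖ)·(Σᵢ aᵢ)⁻², where for p = 2 the triple sum is 0. Then c(θ) > 0. Moreover, for y > 0, at the balanced point θ* := y^{1/p}·1_p one has c(θ*) = ((32/p³)·binom(p,2)² − (8/p²)·binom(p,3))·y^{−2/p}, where binom(p,3) := 0 if p < 3. -/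
/-- The genericity coefficient `c(2/λ(θ), θ)` for depth-`p` scalar factorisation,
expressed in the variables `aᵢ = θᵢ⁻²`:
`c(θ) = 32(Σ_{i<j} aᵢaⱼ)²(Σᵢ aᵢ)⁻³ - 8(Σ_{i<j<k} aᵢaⱼaₖ)(Σᵢ aᵢ)⁻²`. -/
noncomputable def genCoeff (p : ℕ) (θ : Fin p → ℝ) : ℝ :=
  32 * (∑ i : Fin p, ∑ j : Fin p, if i < j then (θ i ^ 2)⁻¹ * (θ j ^ 2)⁻¹ else 0) ^ 2 *
      ((∑ i : Fin p, (θ i ^ 2)⁻¹) ^ 3)⁻¹ -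
    8 * (∑ i : Fin p, ∑ j : Fin p, ∑ k : Fin p,
          if i < j ∧ j < k then (θ i ^ 2)⁻¹ * (θ j ^ 2)⁻¹ * (θ k ^ 2)⁻¹ else 0) *
      ((∑ i : Fin p, (θ i ^ 2)⁻¹) ^ 2)⁻¹

private lemma pair_id {p : ℕ} (f g : Fin p → ℝ) :
    (∑ i : Fin p, ∑ j : Fin p, if i < j then f i * g j else 0)
      + (∑ i : Fin p, ∑ j : Fin p, if i < j then g i * f j else 0)
      + ∑ i : Fin p, f i * g i
    = (∑ i : Fin p, f i) * (∑ i : Fin p, g i) := by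
  have expand : (∑ i : Fin p, f i) * (∑ i : Fin p, g i)
      = (∑ i : Fin p, ∑ j : Fin p, if i < j then f i * g j else 0)
        + ((∑ i : Fin p, ∑ j : Fin p, if j < i then f i * g j else 0)
          + ∑ i : Fin p, ∑ j : Fin p, if i = j then f i * g j else 0) := by
    rw [Finset.sum_mul_sum]
    have key : ∀ i j : Fin p, f i * g j =
        (if i < j then f i * g j else 0) + ((if j < i then f i * g j else 0)
          + (if i = j then f i * g j else 0)) := by
      intro i j
      split_ifs <;> (first | ring1 | (exfalso; omega))
    calc (∑ i : Fin p, ∑ j : Fin p, f i * g j)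
        = ∑ i : Fin p, ∑ j : Fin p, ((if i < j then f i * g j else 0)
            + ((if j < i then f i * g j else 0) + (if i = j then f i * g j else 0))) :=
          Finset.sum_congr rfl fun i _ => Finset.sum_congr rfl fun j _ => key i j
      _ = _ := by simp_rw [Finset.sum_add_distrib]
  have mid : (∑ i : Fin p, ∑ j : Fin p, if j < i then f i * g j else 0)
      = ∑ i : Fin p, ∑ j : Fin p, if i < j then g i * f j else 0 := by
    rw [Finset.sum_comm]
    exact Finset.sum_congr rfl fun i _ => Finset.sum_congr rfl fun j _ => by
      split_ifs <;> ring
  have diag : (∑ i : Fin p, ∑ j : Fin p, if i = j then f i * g j else 0)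
      = ∑ i : Fin p, f i * g i :=
    Finset.sum_congr rfl fun i _ => by simp
  rw [expand, mid, diag]
  ring

private lemma rot3' {p : ℕ} (g : Fin p → Fin p → Fin p → ℝ) :
    ∑ i : Fin p, ∑ j : Fin p, ∑ k : Fin p, g i j k
      = ∑ k : Fin p, ∑ i : Fin p, ∑ j : Fin p, g i j k := by
  calc ∑ i : Fin p, ∑ j : Fin p, ∑ k : Fin p, g i j k
      = ∑ i : Fin p, ∑ k : Fin p, ∑ j : Fin p, g i j k :=
        Finset.sum_congr rfl fun i _ => Finset.sum_comm
    _ = ∑ k : Fin p, ∑ i : Fin p, ∑ j : Fin p, g i j k := Finset.sum_comm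

private lemma mid3 {p : ℕ} (g : Fin p → Fin p → Fin p → ℝ) :
    ∑ i : Fin p, ∑ j : Fin p, ∑ k : Fin p, g i j k
      = ∑ i : Fin p, ∑ k : Fin p, ∑ j : Fin p, g i j k :=
  Finset.sum_congr rfl fun i _ => Finset.sum_comm

private lemma triple_id {p : ℕ} (a : Fin p → ℝ) :
    (∑ i : Fin p, ∑ j : Fin p, if i < j then a i * a j else 0) * (∑ i : Fin p, a i)
      = 3 * (∑ i : Fin p, ∑ j : Fin p, ∑ k : Fin p,
            if i < j ∧ j < k then a i * a j * a k else 0)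
        + ((∑ i : Fin p, ∑ j : Fin p, if i < j then a i ^ 2 * a j else 0)
          + (∑ i : Fin p, ∑ j : Fin p, if i < j then a i * a j ^ 2 else 0)) := by
  have expand : (∑ i : Fin p, ∑ j : Fin p, if i < j then a i * a j else 0) * (∑ i : Fin p, a i)
      = ∑ i : Fin p, ∑ j : Fin p, ∑ k : Fin p, (if i < j then a i * a j * a k else 0) := by
    rw [Finset.sum_mul]
    refine Finset.sum_congr rfl fun i _ => ?_
    rw [Finset.sum_mul]
    refine Finset.sum_congr rfl fun j _ => ?_
    rw [Finset.mul_sum]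
    refine Finset.sum_congr rfl fun k _ => ?_
    split_ifs <;> ring
  have key2 : ∀ i j k : Fin p, (if i < j then a i * a j * a k else 0) =
      (if i < j ∧ j < k then a i * a j * a k else 0)
    + ((if i < j ∧ k < i then a i * a j * a k else 0)
    + ((if i < k ∧ k < j then a i * a j * a k else 0)
    + ((if i < j ∧ k = i then a i * a j * a k else 0)
    + (if i < j ∧ k = j then a i * a j * a k else 0)))) := by
    intro i j k
    split_ifs <;> (first | ring1 | (exfalso; omega))
  rw [expand]
  have split5 : (∑ i : Fin p, ∑ j : Fin p, ∑ k : Fin p, if i < j then a i * a j * a k else 0)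
      = (∑ i : Fin p, ∑ j : Fin p, ∑ k : Fin p, if i < j ∧ j < k then a i * a j * a k else 0)
      + ((∑ i : Fin p, ∑ j : Fin p, ∑ k : Fin p, if i < j ∧ k < i then a i * a j * a k else 0)
      + ((∑ i : Fin p, ∑ j : Fin p, ∑ k : Fin p, if i < k ∧ k < j then a i * a j * a k else 0)
      + ((∑ i : Fin p, ∑ j : Fin p, ∑ k : Fin p, if i < j ∧ k = i then a i * a j * a k else 0)
      + (∑ i : Fin p, ∑ j : Fin p, ∑ k : Fin p, if i < j ∧ k = j then a i * a j * a k else 0)))) := by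
    calc (∑ i : Fin p, ∑ j : Fin p, ∑ k : Fin p, if i < j then a i * a j * a k else 0)
        = ∑ i : Fin p, ∑ j : Fin p, ∑ k : Fin p,
            ((if i < j ∧ j < k then a i * a j * a k else 0)
            + ((if i < j ∧ k < i then a i * a j * a k else 0)
            + ((if i < k ∧ k < j then a i * a j * a k else 0)
            + ((if i < j ∧ k = i then a i * a j * a k else 0)
            + (if i < j ∧ k = j then a i * a j * a k else 0))))) :=
          Finset.sum_congr rfl fun i _ => Finset.sum_congr rfl fun j _ =>
            Finset.sum_congr rfl fun k _ => key2 i j k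
      _ = _ := by simp_rw [Finset.sum_add_distrib]
  rw [split5]
  have hG2 : (∑ i : Fin p, ∑ j : Fin p, ∑ k : Fin p,
        if i < j ∧ k < i then a i * a j * a k else 0)
      = ∑ i : Fin p, ∑ j : Fin p, ∑ k : Fin p,
          if i < j ∧ j < k then a i * a j * a k else 0 := by
    rw [rot3' fun i j k => if i < j ∧ k < i then a i * a j * a k else 0]
    refine Finset.sum_congr rfl fun x _ => Finset.sum_congr rfl fun y _ =>
      Finset.sum_congr rfl fun z _ => ?_
    split_ifs <;> (first | ring1 | (exfalso; omega))
  have hG3 : (∑ i : Fin p, ∑ j : Fin p, ∑ k : Fin p,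
        if i < k ∧ k < j then a i * a j * a k else 0)
      = ∑ i : Fin p, ∑ j : Fin p, ∑ k : Fin p,
          if i < j ∧ j < k then a i * a j * a k else 0 := by
    rw [mid3 fun i j k => if i < k ∧ k < j then a i * a j * a k else 0]
    refine Finset.sum_congr rfl fun x _ => Finset.sum_congr rfl fun y _ =>
      Finset.sum_congr rfl fun z _ => ?_
    split_ifs <;> (first | ring1 | (exfalso; omega))
  have hG4 : (∑ i : Fin p, ∑ j : Fin p, ∑ k : Fin p,
        if i < j ∧ k = i then a i * a j * a k else 0)
      = ∑ i : Fin p, ∑ j : Fin p, if i < j then a i ^ 2 * a j else 0 := by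
    refine Finset.sum_congr rfl fun i _ => Finset.sum_congr rfl fun j _ => ?_
    by_cases h : i < j
    · simp only [h, true_and, Finset.sum_ite_eq', Finset.mem_univ, if_true]
      ring
    · simp [h]
  have hG5 : (∑ i : Fin p, ∑ j : Fin p, ∑ k : Fin p,
        if i < j ∧ k = j then a i * a j * a k else 0)
      = ∑ i : Fin p, ∑ j : Fin p, if i < j then a i * a j ^ 2 else 0 := by
    refine Finset.sum_congr rfl fun i _ => Finset.sum_congr rfl fun j _ => ?_
    by_cases h : i < j
    · simp only [h, true_and, Finset.sum_ite_eq', Finset.mem_univ, if_true]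
      ring
    · simp [h]
  rw [hG2, hG3, hG4, hG5]
  ring

set_option maxHeartbeats 1000000 in
private lemma main_pos {p : ℕ} (hp : 2 ≤ p) (a : Fin p → ℝ) (ha : ∀ i, 0 < a i) :
    0 < 32 * (∑ i : Fin p, ∑ j : Fin p, if i < j then a i * a j else 0) ^ 2 *
          ((∑ i : Fin p, a i) ^ 3)⁻¹ -
        8 * (∑ i : Fin p, ∑ j : Fin p, ∑ k : Fin p,
              if i < j ∧ j < k then a i * a j * a k else 0) *
          ((∑ i : Fin p, a i) ^ 2)⁻¹ := by
  have e1 := pair_id a a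
  have e2 := triple_id a
  have e3 := pair_id (fun i => a i ^ 2) a
  beta_reduce at e3
  set S := ∑ i : Fin p, a i with hS_def
  set E2 := ∑ i : Fin p, ∑ j : Fin p, if i < j then a i * a j else 0 with hE2_def
  set E3 := ∑ i : Fin p, ∑ j : Fin p, ∑ k : Fin p,
      if i < j ∧ j < k then a i * a j * a k else 0 with hE3_def
  set T4 := ∑ i : Fin p, ∑ j : Fin p, if i < j then a i ^ 2 * a j else 0 with hT4_def
  set T5 := ∑ i : Fin p, ∑ j : Fin p, if i < j then a i * a j ^ 2 else 0 with hT5_def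
  set QQ := ∑ i : Fin p, a i ^ 2 with hQQ_def
  set C2 := ∑ i : Fin p, a i * a i with hC2_def
  set C3 := ∑ i : Fin p, a i ^ 2 * a i with hC3_def
  have hC2QQ : C2 = QQ := Finset.sum_congr rfl fun i _ => (pow_two (a i)).symm
  rw [hC2QQ] at e1
  -- e1 : E2 + E2 + QQ = S * S
  -- e2 : E2 * S = 3 * E3 + (T4 + T5)
  -- e3 : T4 + T5 + C3 = QQ * S
  haveI : Nonempty (Fin p) := ⟨⟨0, by omega⟩⟩
  have hSpos : 0 < S := Finset.sum_pos (fun i _ => ha i) Finset.univ_nonempty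
  have hQpos : 0 < QQ := Finset.sum_pos (fun i _ => pow_pos (ha i) 2) Finset.univ_nonempty
  have hC3pos : 0 < C3 :=
    Finset.sum_pos (fun i _ => mul_pos (pow_pos (ha i) 2) (ha i)) Finset.univ_nonempty
  have hE2pos : 0 < E2 := by
    rw [hE2_def]
    apply Finset.sum_pos'
    · intro i _
      apply Finset.sum_nonneg
      intro j _
      split_ifs with h
      · exact (mul_pos (ha i) (ha j)).le
      · exact le_rfl
    · refine ⟨⟨0, by omega⟩, Finset.mem_univ _, ?_⟩
      apply Finset.sum_pos'
      · intro j _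
        split_ifs with h
        · exact (mul_pos (ha _) (ha j)).le
        · exact le_rfl
      · refine ⟨⟨1, by omega⟩, Finset.mem_univ _, ?_⟩
        rw [if_pos (show (⟨0, by omega⟩ : Fin p) < ⟨1, by omega⟩ from Fin.mk_lt_mk.mpr one_pos)]
        exact mul_pos (ha _) (ha _)
  -- Cauchy–Schwarz: C3² ≤ QQ³
  have hcs := Finset.sum_mul_sq_le_sq_mul_sq Finset.univ a (fun i => a i ^ 2)
  beta_reduce at hcs
  have hcs1 : (∑ i : Fin p, a i * a i ^ 2) = C3 :=
    Finset.sum_congr rfl fun i _ => by ring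
  rw [hcs1] at hcs
  have h4 : (∑ i : Fin p, (a i ^ 2) ^ 2) ≤ QQ ^ 2 := by
    rw [hQQ_def]
    exact Finset.sum_sq_le_sq_sum_of_nonneg fun i _ => (pow_pos (ha i) 2).le
  have hC3sq : C3 ^ 2 ≤ QQ ^ 3 := by nlinarith [hcs, h4, hQpos]
  clear_value S E2 E3 T4 T5 QQ C2 C3
  set x := Real.sqrt QQ with hx_def
  have hx2 : x ^ 2 = QQ := Real.sq_sqrt hQpos.le
  have hxpos : 0 < x := Real.sqrt_pos.mpr hQpos
  have hQS : QQ < S ^ 2 := by nlinarith [e1, hE2pos]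
  have hxS : x < S := by nlinarith [hx2, hQS, hxpos, hSpos]
  have h6 : C3 ^ 2 ≤ (x ^ 3) ^ 2 := by
    have : (x ^ 3) ^ 2 = (x ^ 2) ^ 3 := by ring
    rw [this, hx2]; exact hC3sq
  have hCx : C3 ≤ x ^ 3 :=
    (pow_le_pow_iff_left₀ hC3pos.le (pow_pos hxpos 3).le two_ne_zero).mp h6
  have hMain : 0 < (S - x) ^ 2 * (6 * x ^ 2 + 10 * x * S + 5 * S ^ 2) :=
    mul_pos (pow_pos (sub_pos.mpr hxS) 2)
      (by nlinarith [mul_pos hxpos hSpos, pow_pos hxpos 2, pow_pos hSpos 2])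
  have hN : 0 < 5 * S ^ 4 - 9 * S ^ 2 * QQ + 6 * QQ ^ 2 - 2 * S * C3 := by
    nlinarith [hMain, hx2,
      mul_nonneg (by linarith : (0:ℝ) ≤ 2 * S) (by linarith : 0 ≤ x ^ 3 - C3)]
  have hnum : 0 < 32 * E2 ^ 2 - 8 * E3 * S := by
    have hQe : QQ = S * S - 2 * E2 := by linarith [e1]
    have hC3e : C3 = 3 * E3 + QQ * S - E2 * S := by linarith [e2, e3]
    rw [hQe] at hC3e
    rw [hQe, hC3e] at hN
    nlinarith [hN]
  have hS3 : (0:ℝ) < S ^ 3 := by positivity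
  have key : 32 * E2 ^ 2 * (S ^ 3)⁻¹ - 8 * E3 * (S ^ 2)⁻¹
      = (32 * E2 ^ 2 - 8 * E3 * S) / S ^ 3 := by
    field_simp
  rw [key]
  exact div_pos hnum hS3

set_option maxHeartbeats 1000000

/-- Genericity holds for scalar factorisation.
For every `θ` with positive coordinates, `c(θ) > 0`; and at the balanced point
`θ* = y^{1/p}·1_p` one has
`c(θ*) = ((32/p³)·C(p,2)² - (8/p²)·C(p,3))·y^{-2/p}`. -/
theorem stmt_14 (p : ℕ) (hp : 2 ≤ p) :
    (∀ θ : Fin p → ℝ, (∀ i, 0 < θ i) → 0 < genCoeff p θ) ∧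
    (∀ y : ℝ, 0 < y →
      genCoeff p (fun _ => y ^ ((1 : ℝ) / p)) =
        ((32 / (p : ℝ) ^ 3) * (p.choose 2 : ℝ) ^ 2 - (8 / (p : ℝ) ^ 2) * (p.choose 3 : ℝ)) *
          y ^ (-(2 : ℝ) / p)) := by
  constructor
  · intro θ hθ
    have h := main_pos hp (fun i => (θ i ^ 2)⁻¹) (fun i => by have := hθ i; positivity)
    beta_reduce at h
    unfold genCoeff
    exact h
  · intro y hy
    obtain ⟨m, rfl⟩ : ∃ m, p = m + 2 := ⟨p - 2, by omega⟩
    unfold genCoeff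
    beta_reduce
    set c := y ^ ((1 : ℝ) / ((m + 2 : ℕ) : ℝ)) with hc_def
    have hcpos : 0 < c := Real.rpow_pos_of_pos hy _
    set b := (c ^ 2)⁻¹ with hb_def
    have hbpos : 0 < b := by positivity
    have hb0 : b ≠ 0 := ne_of_gt hbpos
    have hm0 : ((m + 2 : ℕ) : ℝ) ≠ 0 := by positivity
    have hv2 : ∀ i j : Fin (m + 2),
        (if i < j then b * b else 0) = b * b * (if i < j then (1:ℝ) else 0) :=
      fun i j => by split_ifs <;> ring
    have hv3 : ∀ i j k : Fin (m + 2),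
        (if i < j ∧ j < k then b * b * b else 0)
          = b * b * b * (if i < j ∧ j < k then (1:ℝ) else 0) :=
      fun i j k => by split_ifs <;> ring
    simp_rw [hv2, hv3, ← Finset.mul_sum]
    simp_rw [Finset.sum_const, Finset.card_univ, Fintype.card_fin, nsmul_eq_mul]
    set N2 := ∑ i : Fin (m + 2), ∑ j : Fin (m + 2), if i < j then (1:ℝ) else 0 with hN2_def
    set N3 := ∑ i : Fin (m + 2), ∑ j : Fin (m + 2), ∑ k : Fin (m + 2),
        if i < j ∧ j < k then (1:ℝ) else 0 with hN3_def
    -- counting identities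
    have e1 := pair_id (p := m + 2) (fun _ => (1:ℝ)) (fun _ => (1:ℝ))
    beta_reduce at e1
    simp only [one_mul] at e1
    rw [Finset.sum_const, Finset.card_univ, Fintype.card_fin, nsmul_eq_mul, mul_one] at e1
    rw [← hN2_def] at e1
    have e2 := triple_id (p := m + 2) (fun _ => (1:ℝ))
    beta_reduce at e2
    simp only [one_mul, mul_one, one_pow] at e2
    rw [Finset.sum_const, Finset.card_univ, Fintype.card_fin, nsmul_eq_mul, mul_one] at e2
    rw [← hN2_def, ← hN3_def] at e2
    push_cast at e1 e2 ⊢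
    -- e1 : N2 + N2 + (m+2) = (m+2)*(m+2),  e2 : N2*(m+2) = 3*N3 + (N2+N2)
    have hN2v : N2 = ((m:ℝ) + 2) * ((m:ℝ) + 1) / 2 := by linear_combination e1 / 2
    have hN3v : N3 = ((m:ℝ) + 2) * ((m:ℝ) + 1) * (m:ℝ) / 6 := by
      linear_combination (-1/3 : ℝ) * e2 + ((m:ℝ) / 3) * hN2v
    -- binomial coefficients
    have hA2 := Nat.add_one_mul_choose_eq (m + 1) 1
    rw [Nat.choose_one_right] at hA2
    have hA3 := Nat.add_one_mul_choose_eq (m + 1) 2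
    have hB := Nat.add_one_mul_choose_eq m 1
    rw [Nat.choose_one_right] at hB
    have hA2R : (((m + 2).choose 2 : ℕ) : ℝ) * 2 = ((m:ℝ) + 2) * ((m:ℝ) + 1) := by
      exact_mod_cast congrArg (Nat.cast (R := ℝ)) hA2.symm
    have hA3R : ((m:ℝ) + 2) * (((m + 1).choose 2 : ℕ) : ℝ) = (((m + 2).choose 3 : ℕ) : ℝ) * 3 := by
      exact_mod_cast congrArg (Nat.cast (R := ℝ)) hA3
    have hBR : (((m + 1).choose 2 : ℕ) : ℝ) * 2 = ((m:ℝ) + 1) * (m:ℝ) := by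
      exact_mod_cast congrArg (Nat.cast (R := ℝ)) hB.symm
    have hX2v : (((m + 2).choose 2 : ℕ) : ℝ) = ((m:ℝ) + 2) * ((m:ℝ) + 1) / 2 := by
      linear_combination hA2R / 2
    have hX3v : (((m + 2).choose 3 : ℕ) : ℝ) = ((m:ℝ) + 2) * ((m:ℝ) + 1) * (m:ℝ) / 6 := by
      linear_combination (-1/3 : ℝ) * hA3R + (((m:ℝ) + 2) / 6) * hBR
    -- exponent identity
    have hyb : y ^ (-(2 : ℝ) / ((m + 2 : ℕ) : ℝ)) = b := by
      rw [hb_def, hc_def, ← Real.rpow_natCast (y ^ ((1 : ℝ) / ((m + 2 : ℕ) : ℝ))) 2,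
        ← Real.rpow_mul hy.le, ← Real.rpow_neg hy.le]
      congr 1
      push_cast
      ring
    rw [hN2v, hN3v, hX2v, hX3v]
    rw [show y ^ (-(2 : ℝ) / ((m:ℝ) + 2)) = b from by push_cast at hyb; exact hyb]
    have hm0' : ((m:ℝ) + 2) ≠ 0 := by positivity
    field_simp
end

section
/- Let y > 0 and let γ : I → ℝ² be a twice-differentiable curve defined on an interval I, with unit speed (‖γ′(t)‖ = 1 for all t ∈ I) and satisfying γ₁(t)·γ₂(t) = y for all t ∈ I. Then for every t ∈ I, (d²/dt²)(‖γ(t)‖²) = 2 + 8y²/‖γ(t)‖⁴ ≥ 2. -/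
private lemma stmt16_fst {γ : ℝ → ℝ × ℝ} {v : ℝ × ℝ} {t : ℝ} (h : HasDerivAt γ v t) :
    HasDerivAt (fun s => (γ s).1) v.1 t :=
  (ContinuousLinearMap.fst ℝ ℝ ℝ).hasFDerivAt.comp_hasDerivAt t h

private lemma stmt16_snd {γ : ℝ → ℝ × ℝ} {v : ℝ × ℝ} {t : ℝ} (h : HasDerivAt γ v t) :
    HasDerivAt (fun s => (γ s).2) v.2 t :=
  (ContinuousLinearMap.snd ℝ ℝ ℝ).hasFDerivAt.comp_hasDerivAt t h

private lemma stmt16_const {I : Set ℝ} (hconv : Convex ℝ I) (hint : (interior I).Nonempty)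
    {f : ℝ → ℝ} {c d t : ℝ} (ht : t ∈ I) (hf : HasDerivAt f d t)
    (hc : ∀ s ∈ I, f s = c) : d = 0 :=
  ((uniqueDiffOn_convex hconv hint) t ht).eq_deriv _ hf.hasDerivWithinAt
    ((hasDerivWithinAt_const t I c).congr hc (hc t ht))

/-- 2-geodesic strong convexity of the sharpness for depth-2 scalar
factorisation. Along any unit-speed twice-differentiable curve `γ` on the hyperbola
`γ₁γ₂ = y` (a nondegenerate interval of parameters), the squared norm `‖γ(t)‖²` (which is
the sharpness `λ`) satisfies `(d²/dt²)‖γ(t)‖² = 2 + 8y²/‖γ(t)‖⁴ ≥ 2`. -/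
theorem stmt_16
    (y : ℝ) (hy : 0 < y)
    (I : Set ℝ) (hI : I.OrdConnected) (hnontriv : ∃ t₁ ∈ I, ∃ t₂ ∈ I, t₁ ≠ t₂)
    (γ γ' γ'' : ℝ → ℝ × ℝ)
    (hγ' : ∀ t ∈ I, HasDerivAt γ (γ' t) t)
    (hγ'' : ∀ t ∈ I, HasDerivAt γ' (γ'' t) t)
    (hunit : ∀ t ∈ I, (γ' t).1 ^ 2 + (γ' t).2 ^ 2 = 1)
    (hcurve : ∀ t ∈ I, (γ t).1 * (γ t).2 = y) :
    ∀ t ∈ I,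
      HasDerivAt (fun s => (γ s).1 ^ 2 + (γ s).2 ^ 2)
        (2 * ((γ t).1 * (γ' t).1 + (γ t).2 * (γ' t).2)) t ∧
      HasDerivAt (fun s => 2 * ((γ s).1 * (γ' s).1 + (γ s).2 * (γ' s).2))
        (2 + 8 * y ^ 2 / ((γ t).1 ^ 2 + (γ t).2 ^ 2) ^ 2) t ∧
      (2 : ℝ) ≤ 2 + 8 * y ^ 2 / ((γ t).1 ^ 2 + (γ t).2 ^ 2) ^ 2 := by
  -- convexity and nonempty interior of `I`
  have hconv : Convex ℝ I := hI.convex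
  have hint : (interior I).Nonempty := by
    obtain ⟨t₁, ht₁, t₂, ht₂, hne⟩ := hnontriv
    rcases lt_or_gt_of_ne hne with h | h
    · exact ⟨(t₁ + t₂) / 2, (isOpen_Ioo.subset_interior_iff.2
        (fun x hx => hI.out ht₁ ht₂ ⟨le_of_lt hx.1, le_of_lt hx.2⟩))
        ⟨by linarith, by linarith⟩⟩
    · exact ⟨(t₁ + t₂) / 2, (isOpen_Ioo.subset_interior_iff.2
        (fun x hx => hI.out ht₂ ht₁ ⟨le_of_lt hx.1, le_of_lt hx.2⟩))
        ⟨by linarith, by linarith⟩⟩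
  intro t ht
  set a := (γ t).1 with hadef
  set b := (γ t).2 with hbdef
  set a' := (γ' t).1 with ha'def
  set b' := (γ' t).2 with hb'def
  set a'' := (γ'' t).1 with ha''def
  set b'' := (γ'' t).2 with hb''def
  have e1 : a' ^ 2 + b' ^ 2 = 1 := hunit t ht
  have e2 : a * b = y := hcurve t ht
  -- e3 : a'b + ab' = 0 (differentiate the constraint along I)
  have e3 : a' * b + a * b' = 0 := by
    have hD : HasDerivAt (fun s => (γ s).1 * (γ s).2)
        (a' * b + a * b') t :=
      (stmt16_fst (hγ' t ht)).mul (stmt16_snd (hγ' t ht))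
    exact stmt16_const hconv hint ht hD hcurve
  -- e4 : a'a'' + b'b'' = 0 (differentiate unit-speed condition)
  have e4 : a' * a'' + b' * b'' = 0 := by
    have hD : HasDerivAt (fun s => (γ' s).1 ^ 2 + (γ' s).2 ^ 2)
        ((2 : ℕ) * (γ' t).1 ^ 1 * a'' + (2 : ℕ) * (γ' t).2 ^ 1 * b'') t :=
      ((stmt16_fst (hγ'' t ht)).pow 2).add ((stmt16_snd (hγ'' t ht)).pow 2)
    have h0 := stmt16_const hconv hint ht hD hunit
    push_cast at h0
    nlinarith [h0]
  -- e5 : a''b + 2a'b' + ab'' = 0 (differentiate e3 along I)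
  have e5 : a'' * b + 2 * (a' * b') + a * b'' = 0 := by
    have hD : HasDerivAt (fun s => (γ' s).1 * (γ s).2 + (γ s).1 * (γ' s).2)
        ((a'' * b + a' * b') + (a' * b' + a * b'')) t :=
      ((stmt16_fst (hγ'' t ht)).mul (stmt16_snd (hγ' t ht))).add
        ((stmt16_fst (hγ' t ht)).mul (stmt16_snd (hγ'' t ht)))
    have h0 : ∀ s ∈ I, (γ' s).1 * (γ s).2 + (γ s).1 * (γ' s).2 = 0 := by
      intro s hs
      have hDs : HasDerivAt (fun u => (γ u).1 * (γ u).2)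
          ((γ' s).1 * (γ s).2 + (γ s).1 * (γ' s).2) s :=
        (stmt16_fst (hγ' s hs)).mul (stmt16_snd (hγ' s hs))
      exact stmt16_const hconv hint hs hDs hcurve
    have := stmt16_const hconv hint ht hD h0
    linarith
  -- positivity of ‖γ t‖²
  have ha : a ≠ 0 := by
    intro h; rw [h] at e2; simp at e2; linarith
  have hr2 : 0 < a ^ 2 + b ^ 2 := by positivity
  -- key algebraic identities
  set k := a' * b'' - b' * a'' with hkdef
  have ha'' : a'' = -k * b' := by linear_combination (-a'') * e1 + a' * e4
  have hb'' : b'' = k * a' := by linear_combination (-b'') * e1 + b' * e4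
  set u := a * a' - b * b' with hudef
  have hu2 : u ^ 2 = a ^ 2 + b ^ 2 := by
    linear_combination (a ^ 2 + b ^ 2) * e1 - (a' * b + a * b') * e3
  have hku : k * u = -(2 * (a' * b')) := by
    linear_combination e5 - b * ha'' - a * hb''
  have ha'b' : a' * b' * (a ^ 2 + b ^ 2) = -y := by
    linear_combination (a * a' + b * b') * e3 - a * b * e1 - e2
  have hv : (a' * b - a * b') * u = 2 * y := by
    linear_combination a * b * e1 - ha'b' + e2
  have hS : (a * a'' + b * b'') * (a ^ 2 + b ^ 2) ^ 2 = 4 * y ^ 2 := by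
    have h1 : (a * a'' + b * b'') = k * (a' * b - a * b') := by
      linear_combination a * ha'' + b * hb''
    have h2 : (a * a'' + b * b'') * u ^ 4 = 4 * y ^ 2 := by
      calc (a * a'' + b * b'') * u ^ 4
          = (k * u) * ((a' * b - a * b') * u) * u ^ 2 := by rw [h1]; ring
        _ = (-(2 * (a' * b'))) * (2 * y) * (a ^ 2 + b ^ 2) := by rw [hku, hv, hu2]
        _ = (-4) * y * (a' * b' * (a ^ 2 + b ^ 2)) := by ring
        _ = 4 * y ^ 2 := by rw [ha'b']; ring
    linear_combination h2 - (a * a'' + b * b'') * (u ^ 2 + a ^ 2 + b ^ 2) * hu2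
  refine ⟨?_, ?_, ?_⟩
  · have hD : HasDerivAt (fun s => (γ s).1 ^ 2 + (γ s).2 ^ 2)
        ((2 : ℕ) * (γ t).1 ^ 1 * a' + (2 : ℕ) * (γ t).2 ^ 1 * b') t :=
      ((stmt16_fst (hγ' t ht)).pow 2).add ((stmt16_snd (hγ' t ht)).pow 2)
    convert hD using 1
    push_cast
    ring
  · have hD : HasDerivAt (fun s => 2 * ((γ s).1 * (γ' s).1 + (γ s).2 * (γ' s).2))
        (2 * ((a' * a' + a * a'') + (b' * b' + b * b''))) t :=
      (((stmt16_fst (hγ' t ht)).mul (stmt16_fst (hγ'' t ht))).add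
        ((stmt16_snd (hγ' t ht)).mul (stmt16_snd (hγ'' t ht)))).const_mul 2
    have hne : (a ^ 2 + b ^ 2) ^ 2 ≠ 0 := by positivity
    have key : 2 * ((a' * a' + a * a'') + (b' * b' + b * b''))
        = 2 + 8 * y ^ 2 / (a ^ 2 + b ^ 2) ^ 2 := by
      have h4 : 8 * y ^ 2 / (a ^ 2 + b ^ 2) ^ 2 = 2 * (a * a'' + b * b'') := by
        rw [div_eq_iff hne]; linear_combination (-2) * hS
      rw [h4]; linear_combination 2 * e1
    rw [key] at hD
    exact hD
  · have h8 : 0 ≤ 8 * y ^ 2 / (a ^ 2 + b ^ 2) ^ 2 := by positivity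
    linarith
end
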